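/- arXiv:1909.05945 — 3 statements merged into one kernel-verified Lean document; each statement's English description precedes it below -/
import Mathlib

section
/- Let f be a nonzero real polynomial in one variable of odd degree such that f′(r) ≠ 0 for every real root r of f. Then the sum over all real roots r of f of the sign of f′(r) equals the sign of the leading coefficient of f. -/
open Polynomial Filter

/-- A polynomial with no zero on `[r, b]` has the same sign at `b` as at `r`. -/
lemma signConst (g : Polynomial ℝ) {r b : ℝ} (hrb : r ≤ b)
    (hno : ∀ x ∈ Set.Icc r b, g.eval x ≠ 0) :
    Real.sign (g.eval b) = Real.sign (g.eval r) := by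
  have hr := hno r ⟨le_refl r, hrb⟩
  have hb := hno b ⟨hrb, le_refl b⟩
  have cont : ContinuousOn (fun x => g.eval x) (Set.Icc r b) :=
    (g.continuous_eval₂ _ |>.continuousOn)
  rcases hr.lt_or_gt with hrn | hrp
  · rcases hb.lt_or_gt with hbn | hbp
    · rw [Real.sign_of_neg hbn, Real.sign_of_neg hrn]
    · obtain ⟨x, hx, hx0⟩ := intermediate_value_Icc hrb cont ⟨hrn.le, hbp.le⟩
      exact absurd hx0 (hno x hx)
  · rcases hb.lt_or_gt with hbn | hbp
    · obtain ⟨x, hx, hx0⟩ := intermediate_value_Icc' hrb cont ⟨hbn.le, hrp.le⟩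
      exact absurd hx0 (hno x hx)
    · rw [Real.sign_of_pos hbp, Real.sign_of_pos hrp]

lemma factorAux (f : Polynomial ℝ) (r : ℝ) (hr : f.eval r = 0) :
    ∃ g : Polynomial ℝ, f = (X - C r) * g ∧ g.eval r = f.derivative.eval r := by
  obtain ⟨g, hg⟩ := (dvd_iff_isRoot).mpr hr
  refine ⟨g, hg, ?_⟩
  rw [hg, derivative_mul]
  simp

lemma signR {f : Polynomial ℝ} {r b : ℝ} (hr : f.eval r = 0)
    (hd : f.derivative.eval r ≠ 0) (hrb : r < b)
    (hno : ∀ x, r < x → x ≤ b → f.eval x ≠ 0) :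
    Real.sign (f.eval b) = Real.sign (f.derivative.eval r) := by
  obtain ⟨g, hg, hgr⟩ := factorAux f r hr
  have hnog : ∀ x ∈ Set.Icc r b, g.eval x ≠ 0 := by
    rintro x ⟨h1, h2⟩ h0
    rcases eq_or_lt_of_le h1 with rfl | h1
    · exact hd (hgr ▸ h0)
    · exact hno x h1 h2 (by rw [hg]; simp [h0])
  have hs := signConst g hrb.le hnog
  have hfb : f.eval b = (b - r) * g.eval b := by rw [hg]; simp
  rw [hfb, ← hgr, ← hs]
  rcases (hnog b ⟨hrb.le, le_rfl⟩).lt_or_gt with h | h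
  · rw [Real.sign_of_neg h, Real.sign_of_neg (mul_neg_of_pos_of_neg (sub_pos.2 hrb) h)]
  · rw [Real.sign_of_pos h, Real.sign_of_pos (mul_pos (sub_pos.2 hrb) h)]

lemma signL {f : Polynomial ℝ} {r a : ℝ} (hr : f.eval r = 0)
    (hd : f.derivative.eval r ≠ 0) (har : a < r)
    (hno : ∀ x, a ≤ x → x < r → f.eval x ≠ 0) :
    Real.sign (f.eval a) = - Real.sign (f.derivative.eval r) := by
  obtain ⟨g, hg, hgr⟩ := factorAux f r hr
  have hnog : ∀ x ∈ Set.Icc a r, g.eval x ≠ 0 := by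
    rintro x ⟨h1, h2⟩ h0
    rcases eq_or_lt_of_le h2 with rfl | h2
    · exact hd (hgr ▸ h0)
    · exact hno x h1 h2 (by rw [hg]; simp [h0])
  have hs := signConst g har.le hnog
  have hfa : f.eval a = (a - r) * g.eval a := by rw [hg]; simp
  rw [hfa, ← hgr, hs]
  rcases (hnog a ⟨le_rfl, har.le⟩).lt_or_gt with h | h
  · rw [Real.sign_of_neg h, Real.sign_of_pos (mul_pos_of_neg_of_neg (sub_neg.2 har) h)]
    ring
  · rw [Real.sign_of_pos h, Real.sign_of_neg (mul_neg_of_neg_of_pos (sub_neg.2 har) h)]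

lemma evTop (f : Polynomial ℝ) (hd : 0 < f.degree) :
    ∀ᶠ x in atTop, Real.sign (f.eval x) = Real.sign f.leadingCoeff := by
  have hl : f.leadingCoeff ≠ 0 := leadingCoeff_ne_zero.2 (ne_zero_of_degree_gt hd)
  rcases hl.lt_or_gt with h | h
  · have := f.tendsto_atBot_of_leadingCoeff_nonpos hd h.le
    filter_upwards [this.eventually_lt_atBot 0] with x hx
    rw [Real.sign_of_neg hx, Real.sign_of_neg h]
  · have := f.tendsto_atTop_of_leadingCoeff_nonneg hd h.le
    filter_upwards [this.eventually_gt_atTop 0] with x hx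
    rw [Real.sign_of_pos hx, Real.sign_of_pos h]

/-- eventual sign at -∞ for odd degree -/
lemma evBot (f : Polynomial ℝ) (hf : f ≠ 0) (hodd : Odd f.natDegree) :
    ∀ᶠ x in atBot, Real.sign (f.eval x) = - Real.sign f.leadingCoeff := by
  have hn0 : f.natDegree ≠ 0 := by
    intro h; rw [h] at hodd; norm_num at hodd
  have hdeg : 0 < f.degree := natDegree_pos_iff_degree_pos.mp (Nat.pos_of_ne_zero hn0)
  set g : Polynomial ℝ := f.comp (-X) with hgdef
  have hgeval : ∀ x : ℝ, g.eval x = f.eval (-x) := by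
    intro x; simp [hgdef]
  have hgnd : g.natDegree = f.natDegree := by
    rw [hgdef, natDegree_comp]; simp
  have hg0 : g ≠ 0 := by
    intro h
    apply hf
    have : f = g.comp (-X) := by
      rw [hgdef, comp_assoc]; simp
    rw [this, h]; simp
  have hgdeg : 0 < g.degree := by
    rw [← natDegree_pos_iff_degree_pos, hgnd]
    exact Nat.pos_of_ne_zero hn0
  have hglc : g.leadingCoeff = - f.leadingCoeff := by
    rw [hgdef, leadingCoeff_comp (by simp)]
    simp [hodd.neg_one_pow]
  have := evTop g hgdeg
  have tend : Filter.Tendsto (fun x : ℝ => -x) atBot atTop := tendsto_neg_atBot_atTop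
  filter_upwards [tend.eventually this] with x hx
  have hx' : g.eval (-x) = f.eval x := by rw [hgeval]; ring_nf
  rw [hx', hglc, Real.sign_neg] at hx
  exact hx

/-- For a nonzero real polynomial `f` of odd degree all of whose real
roots are simple (i.e. `f'(r) ≠ 0` there), the sum over the distinct real roots `r` of
`sign (f'(r))` equals the sign of the leading coefficient of `f`. -/
theorem statement3 (f : Polynomial ℝ) (hf : f ≠ 0) (hodd : Odd f.natDegree)
    (hreg : ∀ r : ℝ, f.eval r = 0 → f.derivative.eval r ≠ 0) :
    ∑ r ∈ f.roots.toFinset, Real.sign (f.derivative.eval r)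
      = Real.sign f.leadingCoeff := by
  classical
  set L := Real.sign f.leadingCoeff with hLdef
  have hn0' : f.natDegree ≠ 0 := by
    intro h; rw [h] at hodd; norm_num at hodd
  have hdeg : 0 < f.degree := natDegree_pos_iff_degree_pos.mp (Nat.pos_of_ne_zero hn0')
  have hlc : f.leadingCoeff ≠ 0 := leadingCoeff_ne_zero.2 hf
  have hL0 : L ≠ 0 := by
    rw [hLdef]; simpa using hlc
  set S := f.roots.toFinset with hS
  have hmem : ∀ x : ℝ, x ∈ S ↔ f.eval x = 0 := by
    intro x
    rw [hS, Multiset.mem_toFinset, mem_roots hf]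
    exact Iff.rfl
  set n := S.card with hn
  set e := S.orderIsoOfFin hn.symm with he
  have hroot : ∀ i : Fin n, f.eval (e i : ℝ) = 0 := fun i => (hmem _).1 (e i).2
  have hd' : ∀ i : Fin n, f.derivative.eval (e i : ℝ) ≠ 0 := fun i => hreg _ (hroot i)
  set c : Fin n → ℝ := fun i => Real.sign (f.derivative.eval (e i : ℝ)) with hc
  -- n ≠ 0 : odd degree polynomial has a real root
  have hne : n ≠ 0 := by
    intro h0
    obtain ⟨x1, hx1⟩ := (evTop f hdeg).exists
    obtain ⟨x0, hx0⟩ := (evBot f hf hodd).exists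
    have hx1ne : f.eval x1 ≠ 0 := by
      intro h; rw [h, Real.sign_zero] at hx1; exact hL0 hx1.symm
    have hx0ne : f.eval x0 ≠ 0 := by
      intro h; rw [h, Real.sign_zero] at hx0
      apply hL0; rw [← neg_neg L, ← hx0, neg_zero]
    have hopp : (0 : ℝ) ∈ Set.uIcc (f.eval x0) (f.eval x1) := by
      rcases hx1ne.lt_or_gt with h1 | h1
      · rcases hx0ne.lt_or_gt with h0' | h0'
        · exfalso
          rw [Real.sign_of_neg h1] at hx1
          rw [Real.sign_of_neg h0', ← hx1] at hx0
          norm_num at hx0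
        · exact Set.mem_uIcc.2 (Or.inr ⟨h1.le, h0'.le⟩)
      · rcases hx0ne.lt_or_gt with h0' | h0'
        · exact Set.mem_uIcc.2 (Or.inl ⟨h0'.le, h1.le⟩)
        · exfalso
          rw [Real.sign_of_pos h1] at hx1
          rw [Real.sign_of_pos h0', ← hx1] at hx0
          norm_num at hx0
    obtain ⟨x, _, hx⟩ := intermediate_value_uIcc
      (f.continuous_eval₂ _ |>.continuousOn (s := Set.uIcc x0 x1)) hopp
    have hxS : x ∈ S := (hmem x).2 hx
    have hSe : S = ∅ := Finset.card_eq_zero.mp h0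
    rw [hSe] at hxS
    simp at hxS
  have hnpos : 0 < n := Nat.pos_of_ne_zero hne
  have hlastlt : ∀ j : Fin n, (j : ℕ) ≤ n - 1 := fun j => Nat.le_sub_one_of_lt j.2
  -- last root : sign f' = L
  have hlast : c ⟨n - 1, Nat.sub_lt hnpos one_pos⟩ = L := by
    set i : Fin n := ⟨n - 1, Nat.sub_lt hnpos one_pos⟩ with hi
    obtain ⟨b, hb1, hb2⟩ := ((evTop f hdeg).and (eventually_gt_atTop (e i : ℝ))).exists
    have hno : ∀ x, (e i : ℝ) < x → x ≤ b → f.eval x ≠ 0 := by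
      intro x h1 h2 hx
      have hxS : x ∈ S := (hmem x).2 hx
      set j := e.symm ⟨x, hxS⟩ with hj
      have hx' : (e j : ℝ) = x := by rw [hj]; simp
      have : e j ≤ e i := e.monotone (by
        apply Fin.mk_le_of_le_val
        exact hlastlt j)
      rw [← hx'] at h1
      exact absurd h1 (not_lt.2 this)
    have := signR (hroot i) (hd' i) hb2 hno
    exact this.symm.trans hb1
  -- first root : sign f' = L
  have hfirst : c ⟨0, hnpos⟩ = L := by
    set i : Fin n := ⟨0, hnpos⟩ with hi
    obtain ⟨a, ha1, ha2⟩ := ((evBot f hf hodd).and (eventually_lt_atBot (e i : ℝ))).exists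
    have hno : ∀ x, a ≤ x → x < (e i : ℝ) → f.eval x ≠ 0 := by
      intro x h1 h2 hx
      have hxS : x ∈ S := (hmem x).2 hx
      set j := e.symm ⟨x, hxS⟩ with hj
      have hx' : (e j : ℝ) = x := by rw [hj]; simp
      have : e i ≤ e j := e.monotone (by
        apply Fin.mk_le_of_le_val
        exact Nat.zero_le _)
      rw [← hx'] at h2
      exact absurd h2 (not_lt.2 this)
    have h := signL (hroot i) (hd' i) ha2 hno
    exact (neg_injective (ha1.symm.trans h)).symm
  -- alternation
  have hstep : ∀ i : ℕ, ∀ h : i + 1 < n,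
      c ⟨i + 1, h⟩ = - c ⟨i, Nat.lt_of_succ_lt h⟩ := by
    intro i h
    set i0 : Fin n := ⟨i, Nat.lt_of_succ_lt h⟩
    set i1 : Fin n := ⟨i + 1, h⟩
    have hlt : (e i0 : ℝ) < (e i1 : ℝ) := by
      have : e i0 < e i1 := e.strictMono (by exact Fin.mk_lt_mk.2 (Nat.lt_succ_self i))
      exact_mod_cast this
    set m : ℝ := ((e i0 : ℝ) + (e i1 : ℝ)) / 2 with hm
    have hm1 : (e i0 : ℝ) < m := by rw [hm]; linarith
    have hm2 : m < (e i1 : ℝ) := by rw [hm]; linarith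
    have hbetween : ∀ x : ℝ, (e i0 : ℝ) < x → x < (e i1 : ℝ) → f.eval x ≠ 0 := by
      intro x h1 h2 hx
      have hxS : x ∈ S := (hmem x).2 hx
      set j := e.symm ⟨x, hxS⟩ with hj
      have hx' : (e j : ℝ) = x := by rw [hj]; simp
      rw [← hx'] at h1 h2
      have hij : i0 < j := e.lt_iff_lt.1 (by exact_mod_cast h1)
      have hji : j < i1 := e.lt_iff_lt.1 (by exact_mod_cast h2)
      have hv1 : i < (j : ℕ) := hij
      have hv2 : (j : ℕ) < i + 1 := hji
      omega
    have hA := signR (hroot i0) (hd' i0) hm1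
      (fun x h1 h2 => hbetween x h1 (lt_of_le_of_lt h2 hm2))
    have hB := signL (hroot i1) (hd' i1) hm2
      (fun x h1 h2 => hbetween x (lt_of_lt_of_le hm1 h1) h2)
    have hkey : c i0 = - c i1 := by
      show Real.sign (f.derivative.eval (e i0 : ℝ))
        = - Real.sign (f.derivative.eval (e i1 : ℝ))
      rw [← hA, hB]
    rw [hkey]; ring
  -- c i = (-1)^i * L
  have hclaim : ∀ i : ℕ, ∀ h : i < n, c ⟨i, h⟩ = (-1 : ℝ) ^ i * L := by
    intro i
    induction i with
    | zero => intro h; simpa using hfirst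
    | succ k ih =>
      intro h
      rw [hstep k h, ih (Nat.lt_of_succ_lt h), pow_succ]
      ring
  -- n is odd
  have hnodd : Odd n := by
    have h1 : ((-1 : ℝ)) ^ (n - 1) * L = L := by
      rw [← hclaim (n - 1) (Nat.sub_lt hnpos one_pos), hlast]
    have h2 : ((-1 : ℝ)) ^ (n - 1) = 1 := by
      have := mul_right_cancel₀ hL0 (h1.trans (one_mul L).symm)
      exact this
    have h3 : Even (n - 1) := by
      by_contra hcon
      rw [(Nat.not_even_iff_odd.1 hcon).neg_one_pow] at h2
      norm_num at h2
    rcases h3 with ⟨k, hk⟩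
    exact ⟨k, by omega⟩
  -- sum computation
  have hsum : ∑ r ∈ S, Real.sign (f.derivative.eval r) = ∑ i : Fin n, c i := by
    rw [← Finset.sum_coe_sort S (fun r => Real.sign (f.derivative.eval r))]
    exact (Equiv.sum_comp e.toEquiv
      (fun x : S => Real.sign (f.derivative.eval (x : ℝ)))).symm
  rw [hsum]
  have h5 : ∀ i : Fin n, c i = (-1 : ℝ) ^ (i : ℕ) * L := by
    intro i
    have := hclaim i i.2
    rwa [Fin.eta] at this
  calc ∑ i : Fin n, c i
      = ∑ i : Fin n, (-1 : ℝ) ^ (i : ℕ) * L :=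
        Finset.sum_congr rfl (fun i _ => h5 i)
    _ = ∑ i ∈ Finset.range n, (-1 : ℝ) ^ i * L :=
        Fin.sum_univ_eq_sum_range (fun i => (-1 : ℝ) ^ i * L) n
    _ = (∑ i ∈ Finset.range n, (-1 : ℝ) ^ i) * L := by rw [Finset.sum_mul]
    _ = L := by rw [neg_one_geom_sum, if_neg (Nat.not_even_iff_odd.2 hnodd), one_mul]
end

section
/- Let f = x⁴ + y⁴ + z⁴ ∈ ℝ[x,y,z] (the Fermat quartic, which defines a smooth complex plane quartic). A real line L ⊂ ℙ²(ℂ) is a bitangent of V(f) if and only if L = V(x + εy + δz) for some ε, δ ∈ {+1, −1}. In particular, V(f) has exactly four real bitangent lines, and each of them is non-split (for instance the restriction of f to V(x − y − z) equals 2(y² + yz + z²)², whose zeros form a complex-conjugate pair). -/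
/-!
On a line `x + b y + c z = 0`, parametrized by `(y, z)`, the Fermat quartic restricts to the
binary quartic `(b y + c z)⁴ + y⁴ + z⁴`, and the line is a bitangent exactly when this is a
constant times the square of a binary quadratic. Comparing coefficients gives a polynomial
system whose only real solutions are `b² = c² = 1`; on lines through `(1 : 0 : 0)` the
restriction is `y⁴ + k z⁴` with `k > 0`, which is never such a square. For `b, c = ±1` the
restriction is `2 (y² + b c y z + z²)²`, and the tangency points are the two points of the line
with `y / z` a root of `ρ² + b c ρ + 1`; these roots are non-real and complex conjugate.
-/

open MvPolynomial

noncomputable section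

/-- Complexification of a real ternary polynomial. -/
def cmap (f : MvPolynomial (Fin 3) ℝ) : MvPolynomial (Fin 3) ℂ :=
  MvPolynomial.map (algebraMap ℝ ℂ) f

/-- Evaluation of the complexification of `f` at a complex point. -/
def cev (f : MvPolynomial (Fin 3) ℝ) (p : Fin 3 → ℂ) : ℂ :=
  eval p (cmap f)

/-- The linear form with coefficient vector `ℓ`, evaluated at `p`. -/
def lin {R : Type*} [CommSemiring R] (ℓ p : Fin 3 → R) : R := ∑ i, ℓ i * p i

/-- The complexification of a real vector. -/
def cvec (v : Fin 3 → ℝ) : Fin 3 → ℂ := fun i => (v i : ℂ)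

/-- Smoothness of the complex plane curve V(f): the gradient is nonzero at every
nonzero complex zero of `f`. -/
def SmoothQuartic (f : MvPolynomial (Fin 3) ℝ) : Prop :=
  ∀ p : Fin 3 → ℂ, p ≠ 0 → cev f p = 0 → ∃ i, eval p (pderiv i (cmap f)) ≠ 0

/-- The line `V(ℓ)` is a bitangent of `V(f)` with tangency points `z₁, z₂`:
the restriction of `f` to the line is a nonzero scalar multiple of the square of a
nonzero quadratic form on the line, whose zeros (with multiplicity) are `z₁, z₂`.
Over ℂ the quadratic form is written as the product of two linear forms `m₁, m₂`,
each nonzero on the line and vanishing at the corresponding tangency point. -/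
def IsBitangentAt (f : MvPolynomial (Fin 3) ℝ) (ℓ z₁ z₂ : Fin 3 → ℂ) : Prop :=
  ℓ ≠ 0 ∧ z₁ ≠ 0 ∧ z₂ ≠ 0 ∧ lin ℓ z₁ = 0 ∧ lin ℓ z₂ = 0 ∧
  ∃ (m₁ m₂ : Fin 3 → ℂ) (c : ℂ), c ≠ 0 ∧
    lin m₁ z₁ = 0 ∧ lin m₂ z₂ = 0 ∧
    (∃ p, lin ℓ p = 0 ∧ lin m₁ p ≠ 0) ∧
    (∃ p, lin ℓ p = 0 ∧ lin m₂ p ≠ 0) ∧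
    (∀ p, lin ℓ p = 0 → cev f p = c * (lin m₁ p * lin m₂ p) ^ 2)

/-- The line `V(ℓ)` is a bitangent of the quartic `V(f)`. -/
def IsBitangent (f : MvPolynomial (Fin 3) ℝ) (ℓ : Fin 3 → ℂ) : Prop :=
  ∃ z₁ z₂, IsBitangentAt f ℓ z₁ z₂

/-- The set of real bitangent lines of `V(f)`, as points of the real projective
plane of lines. -/
def realBitangents (f : MvPolynomial (Fin 3) ℝ) :
    Set (Projectivization ℝ (Fin 3 → ℝ)) :=
  {L | IsBitangent f (cvec L.rep)}

/-- Directional derivative of (the complexification of) `f` along the real vector `v`. -/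
def Dv (f : MvPolynomial (Fin 3) ℝ) (v : Fin 3 → ℝ) (z : Fin 3 → ℂ) : ℂ :=
  ∑ i, (v i : ℂ) * eval z (pderiv i (cmap f))

/-- `Qtype_{L∞}(L) = ε ∈ {+1, -1}` for the real bitangent `L = V(ℓ)` of `V(f)`,
relative to the real line at infinity `V(ℓinf)`: for tangency points normalized so
that `ℓ∞(z̃ᵢ) = 1` and any real `v` with `ℓ(v) ≠ 0`, the product
`(D_v f)(z̃₁)·(D_v f)(z̃₂)` is a nonzero real number of sign `ε`. -/
def HasQtype (f : MvPolynomial (Fin 3) ℝ) (ℓinf : Fin 3 → ℝ) (ℓ : Fin 3 → ℂ)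
    (ε : ℤ) : Prop :=
  ∃ (z₁ z₂ : Fin 3 → ℂ) (v : Fin 3 → ℝ) (r : ℝ),
    IsBitangentAt f ℓ z₁ z₂ ∧
    lin (cvec ℓinf) z₁ = 1 ∧ lin (cvec ℓinf) z₂ = 1 ∧
    lin ℓ (cvec v) ≠ 0 ∧
    Dv f v z₁ * Dv f v z₂ = (r : ℂ) ∧
    ((0 < r ∧ ε = 1) ∨ (r < 0 ∧ ε = -1))

/-- A point of ℙ²(ℂ) (given by a nonzero vector) is real. -/
def IsRealPoint (z : Fin 3 → ℂ) : Prop :=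
  ∃ (w : Fin 3 → ℝ) (t : ℂ), w ≠ 0 ∧ t ≠ 0 ∧ z = t • cvec w


/-- The Fermat quartic `x⁴ + y⁴ + z⁴`. -/
def fermat : MvPolynomial (Fin 3) ℝ := X 0 ^ 4 + X 1 ^ 4 + X 2 ^ 4

open ComplexConjugate

section BinaryQuartic

variable {K : Type*} [Field K] [CharZero K]

lemma quartic_coeffs_eq_zero {e₀ e₁ e₂ e₃ e₄ : K}
    (h : ∀ y : K, e₄ * y ^ 4 + e₃ * y ^ 3 + e₂ * y ^ 2 + e₁ * y + e₀ = 0) :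
    e₀ = 0 ∧ e₁ = 0 ∧ e₂ = 0 ∧ e₃ = 0 ∧ e₄ = 0 := by
  have h₀ := h 0; have h₁ := h 1; have h₂ := h (-1); have h₃ := h 2; have h₄ := h (-2)
  refine ⟨?_, ?_, ?_, ?_, ?_⟩
  · linear_combination h₀
  · linear_combination (2/3 : K) * h₁ - (2/3 : K) * h₂ - (1/12 : K) * h₃ + (1/12 : K) * h₄
  · linear_combination (2/3 : K) * h₁ + (2/3 : K) * h₂ - (1/24 : K) * h₃ - (1/24 : K) * h₄ -
      (5/4 : K) * h₀
  · linear_combination (1/12 : K) * h₃ - (1/12 : K) * h₄ - (1/6 : K) * h₁ + (1/6 : K) * h₂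
  · linear_combination (1/24 : K) * h₃ + (1/24 : K) * h₄ - (1/6 : K) * h₁ - (1/6 : K) * h₂ +
      (1/4 : K) * h₀

lemma coeffs_eq_of_forall_eq_mul_sq {q₀ q₁ q₂ q₃ q₄ C u w v : K}
    (h : ∀ y : K, q₄ * y ^ 4 + q₃ * y ^ 3 + q₂ * y ^ 2 + q₁ * y + q₀ =
      C * (u * y ^ 2 + w * y + v) ^ 2) :
    q₄ = C * u ^ 2 ∧ q₃ = 2 * C * u * w ∧ q₂ = C * (w ^ 2 + 2 * u * v) ∧
      q₁ = 2 * C * w * v ∧ q₀ = C * v ^ 2 := by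
  obtain ⟨h₀, h₁, h₂, h₃, h₄⟩ := quartic_coeffs_eq_zero (e₀ := q₀ - C * v ^ 2)
    (e₁ := q₁ - 2 * C * w * v) (e₂ := q₂ - C * (w ^ 2 + 2 * u * v)) (e₃ := q₃ - 2 * C * u * w)
    (e₄ := q₄ - C * u ^ 2) fun y => by linear_combination h y
  exact ⟨sub_eq_zero.1 h₄, sub_eq_zero.1 h₃, sub_eq_zero.1 h₂, sub_eq_zero.1 h₁, sub_eq_zero.1 h₀⟩

lemma pow_four_add_ne_mul_sq {k : K} (hk : k ≠ 0) (C u w v : K) :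
    ¬ ∀ y : K, y ^ 4 + k = C * (u * y ^ 2 + w * y + v) ^ 2 := by
  intro h
  obtain ⟨h₄, h₃, h₂, -, h₀⟩ := coeffs_eq_of_forall_eq_mul_sq (q₄ := 1) (q₃ := 0) (q₂ := 0)
    (q₁ := 0) (q₀ := k) (C := C) (u := u) (w := w) (v := v) fun y => by linear_combination h y
  have hCu : C * u ≠ 0 := fun h => one_ne_zero (by linear_combination h₄ + u * h)
  have hv : v ≠ 0 := by rintro rfl; exact hk (by simpa using h₀)
  have hw : w = 0 := by
    have : C * u * (2 * w) = 0 := by linear_combination -h₃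
    simpa [hCu] using this
  exact mul_ne_zero hCu hv (by linear_combination (-1/2 : K) * h₂ - (C * w / 2) * hw)

end BinaryQuartic

section QuadraticRoots

variable {e : ℝ}

lemma exists_sq_add_mul_add_one_eq_zero (he : e ^ 2 < 4) : ∃ ρ : ℂ, ρ ^ 2 + e * ρ + 1 = 0 := by
  have hs : ((√(4 - e ^ 2) : ℝ) : ℂ) ^ 2 = 4 - e ^ 2 := by
    rw [← Complex.ofReal_pow, Real.sq_sqrt (by linarith)]; push_cast; ring
  refine ⟨(-e + √(4 - e ^ 2) * Complex.I) / 2, ?_⟩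
  linear_combination (-1/4 : ℂ) * hs + ((√(4 - e ^ 2) : ℂ) ^ 2 / 4) * Complex.I_sq

lemma conj_ne_self_of_sq_add_mul_add_one_eq_zero (he : e ^ 2 < 4) {ρ : ℂ}
    (h : ρ ^ 2 + e * ρ + 1 = 0) : conj ρ ≠ ρ := by
  intro hρ
  obtain ⟨r, rfl⟩ := Complex.conj_eq_iff_real.1 hρ
  have hr : r ^ 2 + e * r + 1 = 0 := by exact_mod_cast h
  nlinarith [sq_nonneg (2 * r + e)]

lemma conj_eq_neg_sub_of_sq_add_mul_add_one_eq_zero (he : e ^ 2 < 4) {ρ : ℂ}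
    (h : ρ ^ 2 + e * ρ + 1 = 0) : conj ρ = -e - ρ := by
  have him : ρ.im * (2 * ρ.re + e) = 0 := by
    have := congrArg Complex.im h
    simp only [sq, Complex.add_im, Complex.mul_im, Complex.ofReal_re, Complex.ofReal_im,
      Complex.one_im, Complex.zero_im] at this
    linear_combination this
  have hre : 2 * ρ.re + e = 0 :=
    (mul_eq_zero.1 him).resolve_left fun h0 =>
      conj_ne_self_of_sq_add_mul_add_one_eq_zero he h (Complex.conj_eq_iff_im.2 h0)
  exact Complex.ext (by simp; linarith) (by simp)

end QuadraticRoots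

lemma mul_add_mul_pow_four_add_eq {R : Type*} [CommRing R] {ε δ : R} (hε : ε ^ 2 = 1)
    (hδ : δ ^ 2 = 1) (y z : R) :
    (ε * y + δ * z) ^ 4 + y ^ 4 + z ^ 4 = 2 * (y ^ 2 + ε * δ * y * z + z ^ 2) ^ 2 := by
  linear_combination (y ^ 4 * (ε ^ 2 + 1) + 4 * ε * δ * y ^ 3 * z + 4 * δ ^ 2 * y ^ 2 * z ^ 2) * hε
    + (4 * y ^ 2 * z ^ 2 + 4 * ε * δ * y * z ^ 3 + z ^ 4 * (δ ^ 2 + 1)) * hδ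

lemma exists_conj_of_two_mul_sq_eq_mul_sq {e : ℝ} (he : e ^ 2 = 1) {C a₁ b₁ a₂ b₂ : ℂ}
    (h : ∀ y : ℂ, 2 * (y ^ 2 + e * y + 1) ^ 2 = C * ((a₁ * y + b₁) * (a₂ * y + b₂)) ^ 2) :
    ∃ ρ : ℂ, conj ρ ≠ ρ ∧ a₁ ≠ 0 ∧ a₂ ≠ 0 ∧ b₁ = -(ρ * a₁) ∧ b₂ = -(conj ρ * a₂) := by
  have he' : (e : ℂ) ^ 2 = 1 := by exact_mod_cast he
  obtain ⟨h₄, h₃, -, h₁, -⟩ := coeffs_eq_of_forall_eq_mul_sq (K := ℂ) (q₄ := 2) (q₃ := 4 * e)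
    (q₂ := 6) (q₁ := 4 * e) (q₀ := 2) (C := C) (u := a₁ * a₂) (w := a₁ * b₂ + a₂ * b₁)
    (v := b₁ * b₂) fun y => by linear_combination (-(2 : ℂ) * y ^ 2) * he' + h y
  have hCu : C * (a₁ * a₂) ≠ 0 := fun h =>
    (two_ne_zero : (2 : ℂ) ≠ 0) (by linear_combination h₄ + a₁ * a₂ * h)
  have ha₁ : a₁ ≠ 0 := left_ne_zero_of_mul (right_ne_zero_of_mul hCu)
  have ha₂ : a₂ ≠ 0 := right_ne_zero_of_mul (right_ne_zero_of_mul hCu)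
  have hw : a₁ * b₂ + a₂ * b₁ ≠ 0 := by
    rintro hw
    have : (e : ℂ) = 0 := by linear_combination h₃ / 4 + (C * (a₁ * a₂) / 2) * hw
    simp [this] at he'
  have hvu : b₁ * b₂ = a₁ * a₂ := by
    have : C * (a₁ * b₂ + a₂ * b₁) * (b₁ * b₂ - a₁ * a₂) = 0 := by
      linear_combination h₃ / 2 - h₁ / 2
    simpa [sub_eq_zero, hw, left_ne_zero_of_mul hCu] using this
  have hwu : a₁ * b₂ + a₂ * b₁ = e * (a₁ * a₂) := by
    have : C * (a₁ * a₂) * (a₁ * b₂ + a₂ * b₁ - e * (a₁ * a₂)) = 0 := by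
      linear_combination e * h₄ - h₃ / 2
    simpa [sub_eq_zero, hCu] using this
  obtain ⟨ρ, rfl⟩ : ∃ ρ, b₁ = -(ρ * a₁) := ⟨-b₁ / a₁, by field_simp⟩
  have hρ : ρ ^ 2 + e * ρ + 1 = 0 := by
    have : a₁ * a₂ * (ρ ^ 2 + e * ρ + 1) = 0 := by linear_combination -hvu - ρ * hwu
    simpa [ha₁, ha₂] using this
  have he4 : e ^ 2 < 4 := by rw [he]; norm_num
  refine ⟨ρ, conj_ne_self_of_sq_add_mul_add_one_eq_zero he4 hρ, ha₁, ha₂, rfl, ?_⟩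
  rw [conj_eq_neg_sub_of_sq_add_mul_add_one_eq_zero he4 hρ]
  have : a₁ * (b₂ + (-e - ρ) * a₂) = 0 := by linear_combination hwu
  simpa [ha₁, add_eq_zero_iff_eq_neg] using this

lemma eq_one_of_bitangent_system {x y W P : ℝ} (hx : 0 ≤ x) (hy : 0 ≤ y)
    (h₁ : W * (x ^ 2 + 1) = 4 * x ^ 3 * y) (h₂ : W * (y ^ 2 + 1) = 4 * x * y ^ 3)
    (h₃ : P ^ 2 = (x ^ 2 + 1) * (y ^ 2 + 1)) (h₄ : 6 * x * y = W + 2 * P) : x = 1 ∧ y = 1 := by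
  have hxy : 0 < x * y := by
    refine (mul_nonneg hx hy).lt_of_ne fun hxy => ?_
    have hW : W = 0 := by
      have : W * (x ^ 2 + 1) = 0 := by linear_combination h₁ - 4 * x ^ 2 * hxy
      simpa [(by positivity : x ^ 2 + 1 ≠ 0)] using this
    nlinarith [sq_nonneg x, sq_nonneg y]
  have hW : 0 < W := by
    have hx₀ : 0 < x := pos_of_mul_pos_left hxy hy
    have hy₀ : 0 < y := pos_of_mul_pos_right hxy hx
    have : 0 < W * (x ^ 2 + 1) := by rw [h₁]; positivity
    exact pos_of_mul_pos_left this (by positivity)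
  obtain rfl : x = y := by
    have : W * ((y - x) * (y + x)) = 0 := by linear_combination y ^ 2 * h₁ - x ^ 2 * h₂
    have hsum : y + x ≠ 0 := by nlinarith
    linarith [(mul_eq_zero.1 ((mul_eq_zero.1 this).resolve_left hW.ne')).resolve_right hsum]
  have hP : P * (x ^ 2 + 1) = x ^ 2 * (x ^ 2 + 3) := by
    linear_combination (-(x ^ 2 + 1) / 2) * h₄ - h₁ / 2
  have hsq : (x ^ 2 * (x ^ 2 + 3)) ^ 2 = ((x ^ 2 + 1) ^ 2) ^ 2 := by
    rw [← hP]; linear_combination (x ^ 2 + 1) ^ 2 * h₃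
  have hx2 : x ^ 2 = 1 ^ 2 := by
    linarith [(pow_left_inj₀ (by positivity) (by positivity) two_ne_zero).1 hsq]
  have hx1 := (pow_left_inj₀ hx zero_le_one two_ne_zero).1 hx2
  exact ⟨hx1, hx1⟩

lemma sq_eq_one_of_forall_eq_mul_sq (b c : ℝ) {C u w v : ℂ}
    (h : ∀ y : ℂ, ((b : ℂ) * y + c) ^ 4 + y ^ 4 + 1 = C * (u * y ^ 2 + w * y + v) ^ 2) :
    b ^ 2 = 1 ∧ c ^ 2 = 1 := by
  obtain ⟨h₄, h₃, h₂, h₁, h₀⟩ := coeffs_eq_of_forall_eq_mul_sq (K := ℂ) (q₄ := b ^ 4 + 1)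
    (q₃ := 4 * b ^ 3 * c) (q₂ := 6 * b ^ 2 * c ^ 2) (q₁ := 4 * b * c ^ 3) (q₀ := c ^ 4 + 1)
    (C := C) (u := u) (w := w) (v := v) fun y => by linear_combination h y
  -- `C * w ^ 2` and `C * u * v` satisfy a system with real coefficients, forcing them to be real
  have hW₁ : C * w ^ 2 * (b ^ 4 + 1) = 4 * b ^ 6 * c ^ 2 := by
    linear_combination C * w ^ 2 * h₄ - (C * u * w + 2 * b ^ 3 * c) / 2 * h₃
  have hW₂ : C * w ^ 2 * (c ^ 4 + 1) = 4 * b ^ 2 * c ^ 6 := by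
    linear_combination C * w ^ 2 * h₀ - (C * w * v + 2 * b * c ^ 3) / 2 * h₁
  have hP : (C * u * v) ^ 2 = (b ^ 4 + 1) * (c ^ 4 + 1) := by
    linear_combination -(c ^ 4 + 1) * h₄ - C * u ^ 2 * h₀
  set W : ℝ := 4 * b ^ 6 * c ^ 2 / (b ^ 4 + 1) with hWdef
  have hW : C * w ^ 2 = W := by
    have hb : (b : ℂ) ^ 4 + 1 ≠ 0 := by exact_mod_cast (by positivity : b ^ 4 + 1 ≠ 0)
    rw [hWdef]; push_cast
    rw [eq_div_iff hb, hW₁]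
  have hPW : C * u * v = ((6 * b ^ 2 * c ^ 2 - W) / 2 : ℝ) := by
    push_cast; linear_combination -h₂ / 2 - hW / 2
  exact eq_one_of_bitangent_system (x := b ^ 2) (y := c ^ 2) (W := W)
    (P := (6 * b ^ 2 * c ^ 2 - W) / 2) (sq_nonneg b) (sq_nonneg c)
    (Complex.ofReal_injective (by push_cast; linear_combination hW₁ - ((b : ℂ) ^ 4 + 1) * hW))
    (Complex.ofReal_injective (by push_cast; linear_combination hW₂ - ((c : ℂ) ^ 4 + 1) * hW))
    (Complex.ofReal_injective (by rw [Complex.ofReal_pow, ← hPW]; push_cast; linear_combination hP))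
    (by ring)

lemma cev_fermat (p : Fin 3 → ℂ) : cev fermat p = p 0 ^ 4 + p 1 ^ 4 + p 2 ^ 4 := by
  simp [cev, cmap, fermat]

lemma lin_eq {R : Type*} [CommSemiring R] (ℓ p : Fin 3 → R) :
    lin ℓ p = ℓ 0 * p 0 + ℓ 1 * p 1 + ℓ 2 * p 2 := by
  simp [lin, Fin.sum_univ_three]

lemma IsRealPoint.conj_div {z : Fin 3 → ℂ} (hz : IsRealPoint z) (i j : Fin 3) :
    conj (z i / z j) = z i / z j := by
  obtain ⟨w, t, -, ht, rfl⟩ := hz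
  simp [cvec, mul_div_mul_left _ _ ht, ← Complex.ofReal_div]

section LinePoints

variable (b c : ℝ)

def linePt (y z : ℂ) : Fin 3 → ℂ := ![-(b * y + c * z), y, z]

variable {b c}

lemma lin_linePt (m : Fin 3 → ℂ) (y z : ℂ) :
    lin m (linePt b c y z) = (m 1 - b * m 0) * y + (m 2 - c * m 0) * z := by
  simp only [lin_eq, linePt, Matrix.cons_val_zero, Matrix.cons_val_one, Matrix.cons_val]
  ring

lemma lin_cvec_smul_linePt (t : ℝ) (y z : ℂ) :
    lin (cvec (t • ![1, b, c])) (linePt b c y z) = 0 := by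
  simp only [lin_eq, linePt, cvec, Matrix.smul_cons, smul_eq_mul, Matrix.cons_val_zero,
    Matrix.cons_val_one, Matrix.cons_val]
  push_cast
  ring

lemma eq_linePt_of_lin_eq_zero {t : ℝ} (ht : t ≠ 0) {p : Fin 3 → ℂ}
    (hp : lin (cvec (t • ![1, b, c])) p = 0) : p = linePt b c (p 1) (p 2) := by
  have : (t : ℂ) * (p 0 + b * p 1 + c * p 2) = 0 := by
    simp only [lin_eq, cvec, Matrix.smul_cons, smul_eq_mul, Matrix.cons_val_zero,
      Matrix.cons_val_one, Matrix.cons_val] at hp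
    push_cast at hp
    linear_combination hp
  have h0 : p 0 = -(b * p 1 + c * p 2) := by
    linear_combination (mul_eq_zero.1 this).resolve_left (by exact_mod_cast ht)
  ext i; fin_cases i <;> simp [linePt, h0]

lemma cev_fermat_linePt (y z : ℂ) :
    cev fermat (linePt b c y z) = (b * y + c * z) ^ 4 + y ^ 4 + z ^ 4 := by
  simp only [cev_fermat, linePt, Matrix.cons_val_zero, Matrix.cons_val_one, Matrix.cons_val]
  ring

lemma smul_linePt (a y z : ℂ) : a • linePt b c y z = linePt b c (a * y) (a * z) := by
  simp only [linePt, Matrix.smul_cons, smul_eq_mul, Matrix.smul_empty]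
  ring_nf

lemma conj_linePt (y z : ℂ) :
    (fun i => conj (linePt b c y z i)) = linePt b c (conj y) (conj z) := by
  ext i; fin_cases i <;> simp [linePt]

end LinePoints

lemma fermat_restrict_eq {t b c : ℝ} {C : ℂ} {m₁ m₂ : Fin 3 → ℂ}
    (h : ∀ p, lin (cvec (t • ![1, b, c])) p = 0 → cev fermat p = C * (lin m₁ p * lin m₂ p) ^ 2)
    (y : ℂ) :
    ((b : ℂ) * y + c) ^ 4 + y ^ 4 + 1 = C * (((m₁ 1 - b * m₁ 0) * y + (m₁ 2 - c * m₁ 0)) *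
      ((m₂ 1 - b * m₂ 0) * y + (m₂ 2 - c * m₂ 0))) ^ 2 := by
  have := h _ (lin_cvec_smul_linePt t y 1)
  rw [cev_fermat_linePt, lin_linePt, lin_linePt] at this
  linear_combination this

lemma not_isBitangent_fermat_of_apply_zero_eq_zero {ℓ : Fin 3 → ℝ} (hℓ : ℓ ≠ 0)
    (h0 : ℓ 0 = 0) : ¬ IsBitangent fermat (cvec ℓ) := by
  rintro ⟨-, -, -, -, -, -, -, m₁, m₂, C, -, -, -, -, -, hres⟩
  have hk : ((ℓ 2 ^ 4 + ℓ 1 ^ 4 : ℝ) : ℂ) ≠ 0 := by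
    have : ℓ 1 ≠ 0 ∨ ℓ 2 ≠ 0 := by
      by_contra! h
      exact hℓ (by ext i; fin_cases i <;> simp [h0, h.1, h.2])
    have : 0 < ℓ 2 ^ 4 + ℓ 1 ^ 4 := by rcases this with h | h <;> positivity
    exact_mod_cast this.ne'
  set B₁ := m₁ 1 * ℓ 2 - m₁ 2 * ℓ 1
  set B₂ := m₂ 1 * ℓ 2 - m₂ 2 * ℓ 1
  refine pow_four_add_ne_mul_sq hk C (m₁ 0 * m₂ 0) (m₁ 0 * B₂ + m₂ 0 * B₁) (B₁ * B₂) fun y => ?_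
  have := hres ![y, ℓ 2, -ℓ 1] (by simp [lin_eq, cvec, h0]; ring)
  simp only [cev_fermat, lin_eq, Matrix.cons_val_zero, Matrix.cons_val_one, Matrix.cons_val] at this
  push_cast
  linear_combination this

lemma sq_eq_one_of_isBitangent_fermat {t b c : ℝ}
    (h : IsBitangent fermat (cvec (t • ![1, b, c]))) : b ^ 2 = 1 ∧ c ^ 2 = 1 := by
  obtain ⟨-, -, -, -, -, -, -, m₁, m₂, C, -, -, -, -, -, hres⟩ := h
  exact sq_eq_one_of_forall_eq_mul_sq b c (C := C) (u := (m₁ 1 - b * m₁ 0) * (m₂ 1 - b * m₂ 0))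
    (w := (m₁ 1 - b * m₁ 0) * (m₂ 2 - c * m₂ 0) + (m₁ 2 - c * m₁ 0) * (m₂ 1 - b * m₂ 0))
    (v := (m₁ 2 - c * m₁ 0) * (m₂ 2 - c * m₂ 0)) fun y =>
      (fermat_restrict_eq hres y).trans (by ring)

lemma isBitangentAt_fermat_linePt {t ε δ : ℝ} (ht : t ≠ 0) (hε : ε ^ 2 = 1) (hδ : δ ^ 2 = 1)
    {ρ : ℂ} (hρ : ρ ^ 2 + (ε * δ : ℝ) * ρ + 1 = 0) :
    IsBitangentAt fermat (cvec (t • ![1, ε, δ])) (linePt ε δ ρ 1) (linePt ε δ (conj ρ) 1) := by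
  have he : (ε * δ) ^ 2 < 4 := by rw [mul_pow, hε, hδ]; norm_num
  have hne := conj_ne_self_of_sq_add_mul_add_one_eq_zero he hρ
  refine ⟨fun h => ht (by simpa [cvec] using congrFun h 0),
    fun h => by simpa [linePt] using congrFun h 2, fun h => by simpa [linePt] using congrFun h 2,
    lin_cvec_smul_linePt t _ _, lin_cvec_smul_linePt t _ _, ![0, 1, -ρ], ![0, 1, -conj ρ], 2,
    two_ne_zero, ?_, ?_, ⟨_, lin_cvec_smul_linePt t (conj ρ) 1, ?_⟩,
    ⟨_, lin_cvec_smul_linePt t ρ 1, ?_⟩, fun p hp => ?_⟩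
  · simp [lin_linePt]
  · simp [lin_linePt]
  · intro h
    simp only [lin_linePt, Matrix.cons_val_zero, Matrix.cons_val_one, Matrix.cons_val] at h
    exact hne (by linear_combination h)
  · intro h
    simp only [lin_linePt, Matrix.cons_val_zero, Matrix.cons_val_one, Matrix.cons_val] at h
    exact hne (by linear_combination -h)
  · rw [eq_linePt_of_lin_eq_zero ht hp, cev_fermat_linePt, lin_linePt, lin_linePt,
      conj_eq_neg_sub_of_sq_add_mul_add_one_eq_zero he hρ]
    have hε' : (ε : ℂ) ^ 2 = 1 := by exact_mod_cast hε
    have hδ' : (δ : ℂ) ^ 2 = 1 := by exact_mod_cast hδ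
    simp only [mul_add_mul_pow_four_add_eq hε' hδ', Matrix.cons_val_zero, Matrix.cons_val_one,
      Matrix.cons_val, mul_zero, sub_zero, one_mul]
    push_cast at hρ ⊢
    set y := p 1
    set z := p 2
    linear_combination 2 * z ^ 2 * (2 * (y ^ 2 + ε * δ * y * z + z ^ 2) -
      (ρ ^ 2 + ε * δ * ρ + 1) * z ^ 2) * hρ

theorem isBitangent_fermat_iff {ℓ : Fin 3 → ℝ} (hℓ : ℓ ≠ 0) :
    IsBitangent fermat (cvec ℓ) ↔
      ∃ t ε δ : ℝ, t ≠ 0 ∧ ε ^ 2 = 1 ∧ δ ^ 2 = 1 ∧ ℓ = t • ![(1 : ℝ), ε, δ] := by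
  constructor
  · intro h
    have h0 : ℓ 0 ≠ 0 := fun h0 => not_isBitangent_fermat_of_apply_zero_eq_zero hℓ h0 h
    have hℓ' : ℓ = ℓ 0 • ![1, ℓ 1 / ℓ 0, ℓ 2 / ℓ 0] := by
      ext i; fin_cases i <;> simp [mul_div_cancel₀ _ h0]
    rw [hℓ'] at h
    obtain ⟨hb, hc⟩ := sq_eq_one_of_isBitangent_fermat h
    exact ⟨ℓ 0, _, _, h0, hb, hc, hℓ'⟩
  · rintro ⟨t, ε, δ, ht, hε, hδ, rfl⟩
    obtain ⟨ρ, hρ⟩ := exists_sq_add_mul_add_one_eq_zero (e := ε * δ)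
      (by rw [mul_pow, hε, hδ]; norm_num)
    exact ⟨_, _, isBitangentAt_fermat_linePt ht hε hδ hρ⟩

lemma eq_smul_linePt_of_lin_eq_zero {t b c : ℝ} (ht : t ≠ 0) {z m : Fin 3 → ℂ} {r : ℂ}
    (hz : z ≠ 0) (hzℓ : lin (cvec (t • ![1, b, c])) z = 0) (hzm : lin m z = 0)
    (ha : m 1 - b * m 0 ≠ 0) (hr : m 2 - c * m 0 = -(r * (m 1 - b * m 0))) :
    z 2 ≠ 0 ∧ z = z 2 • linePt b c r 1 := by
  have hz' := eq_linePt_of_lin_eq_zero ht hzℓ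
  rw [hz', lin_linePt, hr] at hzm
  have h1 : z 1 = r * z 2 := by
    have : (m 1 - b * m 0) * (z 1 - r * z 2) = 0 := by linear_combination hzm
    linear_combination (mul_eq_zero.1 this).resolve_left ha
  rw [h1] at hz'
  refine ⟨fun h2 => hz ?_, by rw [smul_linePt, mul_one, mul_comm]; exact hz'⟩
  rw [hz', h2]; ext i; fin_cases i <;> simp [linePt]

lemma not_isRealPoint_smul_linePt {b c : ℝ} {a r : ℂ} (ha : a ≠ 0) (hr : conj r ≠ r) :
    ¬ IsRealPoint (a • linePt b c r 1) := fun h =>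
  hr (by simpa [linePt, mul_div_cancel_left₀ _ ha] using h.conj_div 1 2)

theorem IsBitangentAt.fermat_tangency {ℓ : Fin 3 → ℝ} (hℓ : ℓ ≠ 0) {z₁ z₂ : Fin 3 → ℂ}
    (h : IsBitangentAt fermat (cvec ℓ) z₁ z₂) :
    ¬ IsRealPoint z₁ ∧ ¬ IsRealPoint z₂ ∧
      ∃ t : ℂ, t ≠ 0 ∧ (fun i => conj (z₁ i)) = t • z₂ := by
  obtain ⟨t, ε, δ, ht, hε, hδ, rfl⟩ := (isBitangent_fermat_iff hℓ).1 ⟨z₁, z₂, h⟩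
  obtain ⟨-, hz₁, hz₂, hz₁ℓ, hz₂ℓ, m₁, m₂, C, -, hm₁, hm₂, -, -, hres⟩ := h
  have he : (ε * δ) ^ 2 = 1 := by rw [mul_pow, hε, hδ]; norm_num
  have hε' : (ε : ℂ) ^ 2 = 1 := by exact_mod_cast hε
  have hδ' : (δ : ℂ) ^ 2 = 1 := by exact_mod_cast hδ
  obtain ⟨ρ, hρ, ha₁, ha₂, hr₁, hr₂⟩ := exists_conj_of_two_mul_sq_eq_mul_sq he fun y => by
    rw [← fermat_restrict_eq hres y]
    push_cast
    linear_combination (mul_add_mul_pow_four_add_eq hε' hδ' y 1).symm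
  obtain ⟨ha₁, hz₁⟩ := eq_smul_linePt_of_lin_eq_zero ht hz₁ hz₁ℓ hm₁ ha₁ hr₁
  obtain ⟨ha₂, hz₂⟩ := eq_smul_linePt_of_lin_eq_zero ht hz₂ hz₂ℓ hm₂ ha₂ hr₂
  generalize z₁ 2 = a₁ at ha₁ hz₁
  generalize z₂ 2 = a₂ at ha₂ hz₂
  subst hz₁ hz₂
  refine ⟨not_isRealPoint_smul_linePt ha₁ hρ,
    not_isRealPoint_smul_linePt ha₂ (by rwa [Complex.conj_conj, ne_comm]),
    conj a₁ / a₂, div_ne_zero ((map_ne_zero _).2 ha₁) ha₂, ?_⟩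
  simp only [smul_linePt, conj_linePt]
  field_simp
  simp

lemma vecCons_one_ne_zero (b c : ℝ) : ![(1 : ℝ), b, c] ≠ 0 := fun h => one_ne_zero (congrFun h 0)

def lineMk (v : ℝ × ℝ) : Projectivization ℝ (Fin 3 → ℝ) :=
  .mk ℝ ![1, v.1, v.2] (vecCons_one_ne_zero v.1 v.2)

lemma lineMk_injective : Function.Injective lineMk := by
  intro v w h
  obtain ⟨a, ha⟩ := (Projectivization.mk_eq_mk_iff' ℝ _ _ _ _).1 h
  have h0 := congrFun ha 0
  have h1 := congrFun ha 1
  have h2 := congrFun ha 2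
  simp only [Pi.smul_apply, smul_eq_mul, Matrix.cons_val_zero, Matrix.cons_val_one,
    Matrix.cons_val, mul_one] at h0 h1 h2
  rw [h0, one_mul] at h1 h2
  exact Prod.ext h1.symm h2.symm

lemma eq_lineMk_iff (L : Projectivization ℝ (Fin 3 → ℝ)) (v : ℝ × ℝ) :
    L = lineMk v ↔ ∃ t : ℝ, t ≠ 0 ∧ L.rep = t • ![1, v.1, v.2] := by
  conv_lhs => rw [← L.mk_rep]
  rw [lineMk, Projectivization.mk_eq_mk_iff']
  constructor
  · rintro ⟨t, ht⟩
    exact ⟨t, by rintro rfl; exact L.rep_nonzero (by simp [← ht]), ht.symm⟩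
  · rintro ⟨t, -, ht⟩
    exact ⟨t, ht.symm⟩

lemma realBitangents_fermat :
    realBitangents fermat = lineMk '' ({1, -1} ×ˢ {1, -1}) := by
  ext L
  simp only [realBitangents, Set.mem_ofPred_eq, isBitangent_fermat_iff L.rep_nonzero,
    Set.mem_image, Set.mem_prod, Set.mem_insert_iff, Set.mem_singleton_iff, ← sq_eq_one_iff]
  constructor
  · rintro ⟨t, ε, δ, ht, hε, hδ, hL⟩
    exact ⟨(ε, δ), ⟨hε, hδ⟩, ((eq_lineMk_iff L (ε, δ)).2 ⟨t, ht, hL⟩).symm⟩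
  · rintro ⟨⟨ε, δ⟩, ⟨hε, hδ⟩, rfl⟩
    obtain ⟨t, ht, hL⟩ := (eq_lineMk_iff _ (ε, δ)).1 rfl
    exact ⟨t, ε, δ, ht, hε, hδ, hL⟩

lemma ncard_realBitangents_fermat : (realBitangents fermat).ncard = 4 := by
  rw [realBitangents_fermat, Set.ncard_image_of_injective _ lineMk_injective, Set.ncard_prod,
    Set.ncard_pair (by norm_num)]

/-- A real line is a bitangent of the Fermat quartic `x⁴ + y⁴ + z⁴`
iff it is `V(x + εy + δz)` with `ε, δ ∈ {±1}`; so there are exactly four real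
bitangent lines, each of them non-split (its tangency points form a complex-conjugate
pair of non-real points); for instance the restriction of `f` to `V(x − y − z)` is
`2(y² + yz + z²)²`. -/
theorem statement7 :
    (∀ ℓ : Fin 3 → ℝ, ℓ ≠ 0 →
      (IsBitangent fermat (cvec ℓ) ↔
        ∃ t ε δ : ℝ, t ≠ 0 ∧ (ε = 1 ∨ ε = -1) ∧ (δ = 1 ∨ δ = -1) ∧
          ℓ = t • ![(1 : ℝ), ε, δ])) ∧
    (realBitangents fermat).ncard = 4 ∧
    (∀ ℓ : Fin 3 → ℝ, ℓ ≠ 0 → ∀ z₁ z₂ : Fin 3 → ℂ,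
      IsBitangentAt fermat (cvec ℓ) z₁ z₂ →
        ¬ IsRealPoint z₁ ∧ ¬ IsRealPoint z₂ ∧
        ∃ t : ℂ, t ≠ 0 ∧ (fun i => (starRingEnd ℂ) (z₁ i)) = t • z₂) ∧
    (∀ y z : ℂ, cev fermat ![y + z, y, z] = 2 * (y ^ 2 + y * z + z ^ 2) ^ 2) := by
  refine ⟨fun ℓ hℓ => ?_, ncard_realBitangents_fermat,
    fun ℓ hℓ z₁ z₂ h => h.fermat_tangency hℓ, fun y z => ?_⟩
  · simpa only [← sq_eq_one_iff] using isBitangent_fermat_iff hℓ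
  · simp only [cev_fermat, Matrix.cons_val_zero, Matrix.cons_val_one, Matrix.cons_val]
    ring

end
end

section
/- Let f ∈ ℝ[x,y,z] be homogeneous of degree 4 defining a smooth complex plane quartic Q = V(f), and let L be a real bitangent of Q that is either non-split (its tangency points form a complex-conjugate pair) or a hyperflex line (its two tangency points coincide at a real point). Then for every real line L∞ ≠ L not containing the tangency points of L, the Qtype of L relative to L∞ is defined and Qtype_{L∞}(L) = +1; moreover, in the non-split case the tangency points automatically avoid every real line L∞ ≠ L. -/
open MvPolynomial

noncomputable section

/-- The tangency points `z₁, z₂` form a complex-conjugate pair of non-real points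
(a non-split real bitangent). -/
def NonSplitPair (z₁ z₂ : Fin 3 → ℂ) : Prop :=
  (∃ t : ℂ, t ≠ 0 ∧ (fun i => (starRingEnd ℂ) (z₁ i)) = t • z₂) ∧ ¬ IsRealPoint z₁

/-- The two tangency points coincide at a real point (a hyperflex line). -/
def HyperflexPair (z₁ z₂ : Fin 3 → ℂ) : Prop :=
  (∃ t : ℂ, t ≠ 0 ∧ z₂ = t • z₁) ∧ IsRealPoint z₁

lemma lin_add {R : Type*} [CommRing R] (ℓ z w : Fin 3 → R) :
    lin ℓ (z + w) = lin ℓ z + lin ℓ w := by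
  simp [lin, Fin.sum_univ_three]; ring

lemma lin_smul {R : Type*} [CommRing R] (ℓ z : Fin 3 → R) (a : R) :
    lin ℓ (a • z) = a * lin ℓ z := by
  simp [lin, Fin.sum_univ_three]; ring

lemma propto {F : Type*} [Field F] (a b : Fin 3 → F) (hb : b ≠ 0)
    (h : ∀ i j, a i * b j = a j * b i) : ∃ s : F, a = s • b := by
  have hk : ∃ k, b k ≠ 0 := by
    by_contra hc
    push_neg at hc
    exact hb (funext hc)
  obtain ⟨k, hk⟩ := hk
  refine ⟨a k / b k, funext fun i => ?_⟩
  show a i = a k / b k * b i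
  have := h i k
  field_simp
  linear_combination this

def cr {R : Type*} [CommRing R] (a b : Fin 3 → R) : Fin 3 → R :=
  ![a 1 * b 2 - a 2 * b 1, a 2 * b 0 - a 0 * b 2, a 0 * b 1 - a 1 * b 0]

lemma cr_cr {R : Type*} [CommRing R] (a b c : Fin 3 → R) :
    cr a (cr b c) = lin a c • b - lin a b • c := by
  funext i
  fin_cases i <;> simp [cr, lin, Fin.sum_univ_three] <;> ring

lemma cr_minors {R : Type*} [CommRing R] (a b : Fin 3 → R) (h : cr a b = 0) :
    ∀ i j, a i * b j = a j * b i := by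
  have h0 := congrFun h 0
  have h1 := congrFun h 1
  have h2 := congrFun h 2
  simp [cr] at h0 h1 h2
  intro i j
  fin_cases i <;> fin_cases j <;> simp <;>
    first
      | linear_combination h0
      | linear_combination -h0
      | linear_combination h1
      | linear_combination -h1
      | linear_combination h2
      | linear_combination -h2

def lpoly (z w : Fin 3 → ℂ) : MvPolynomial (Fin 3) ℂ →ₐ[ℂ] Polynomial ℂ :=
  aeval (fun i => Polynomial.C (z i) + Polynomial.X * Polynomial.C (w i))

lemma lpoly_eval (z w : Fin 3 → ℂ) (P : MvPolynomial (Fin 3) ℂ) (t : ℂ) :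
    (lpoly z w P).eval t = eval (z + t • w) P := by
  induction P using MvPolynomial.induction_on with
  | C a => simp [lpoly]
  | add p q hp hq => simp only [map_add, Polynomial.eval_add, hp, hq]
  | mul_X p i hp =>
      rw [map_mul, Polynomial.eval_mul, hp]
      have hX : Polynomial.eval t (lpoly z w (X i)) = z i + t * w i := by
        simp only [lpoly, aeval_X, Polynomial.eval_add, Polynomial.eval_mul,
          Polynomial.eval_C, Polynomial.eval_X]
      rw [hX, eval_mul, eval_X]
      simp only [Pi.add_apply, Pi.smul_apply, smul_eq_mul]

lemma lpoly_coeff0 (z w : Fin 3 → ℂ) (P : MvPolynomial (Fin 3) ℂ) :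
    (lpoly z w P).coeff 0 = eval z P := by
  have := lpoly_eval z w P 0
  simpa [Polynomial.eval_zero, Polynomial.coeff_zero_eq_eval_zero] using this

lemma lpoly_coeff1 (z w : Fin 3 → ℂ) (P : MvPolynomial (Fin 3) ℂ) :
    (lpoly z w P).coeff 1 = ∑ i, w i * eval z (pderiv i P) := by
  induction P using MvPolynomial.induction_on with
  | C a => simp [lpoly]
  | add p q hp hq => simp [map_add, Polynomial.coeff_add, hp, hq, Finset.sum_add_distrib,
      mul_add]
  | mul_X p j hp =>
      have hXj : lpoly z w (X j) = Polynomial.C (z j) + Polynomial.X * Polynomial.C (w j) := by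
        simp [lpoly]
      rw [map_mul, hXj]
      have hcm : (lpoly z w p * (Polynomial.C (z j) + Polynomial.X * Polynomial.C (w j))).coeff 1
          = (lpoly z w p).coeff 0 * w j + (lpoly z w p).coeff 1 * z j := by
        rw [mul_add, Polynomial.coeff_add, Polynomial.coeff_mul_C]
        have : lpoly z w p * (Polynomial.X * Polynomial.C (w j))
            = Polynomial.X * (lpoly z w p * Polynomial.C (w j)) := by ring
        rw [this, Polynomial.coeff_X_mul, Polynomial.coeff_mul_C]
        ring
      rw [hcm, lpoly_coeff0, hp]
      have : ∀ i, w i * eval z (pderiv i (p * X j))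
          = w i * (eval z (pderiv i p) * z j) + w i * (eval z p * if j = i then 1 else 0) := by
        intro i
        rw [pderiv_mul, pderiv_X]
        simp only [eval_add, eval_mul, eval_X, Pi.single_apply]
        split <;> (simp; try ring)
      rw [Finset.sum_congr rfl fun i _ => this i, Finset.sum_add_distrib]
      simp [Finset.mul_sum, Finset.sum_mul, Fin.sum_univ_three]
      ring

lemma cmap_eval_conj (g : MvPolynomial (Fin 3) ℝ) (z : Fin 3 → ℂ) :
    eval (fun i => (starRingEnd ℂ) (z i)) (cmap g) = (starRingEnd ℂ) (eval z (cmap g)) := by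
  rw [cmap, eval_map, eval_map]
  rw [MvPolynomial.eval₂_comp_left (starRingEnd ℂ) (algebraMap ℝ ℂ) z g]
  congr 1
  ext r
  simp [Complex.conj_ofReal]

lemma cmap_eval_real (g : MvPolynomial (Fin 3) ℝ) (x : Fin 3 → ℝ) :
    eval (cvec x) (cmap g) = ((eval x g : ℝ) : ℂ) := by
  rw [cmap, eval_map]
  have : eval x g = eval₂ (RingHom.id ℝ) x g := by
    rw [eval₂_id]
  have h2 := MvPolynomial.eval₂_comp_left (algebraMap ℝ ℂ) (RingHom.id ℝ) x g
  rw [RingHom.comp_id] at h2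
  have h3 : cvec x = ⇑(algebraMap ℝ ℂ) ∘ x := rfl
  rw [this, h3, ← h2]
  rfl

lemma coeff1_X2 (S : Polynomial ℂ) : (Polynomial.X ^ 2 * S).coeff 1 = 0 := by
  rw [pow_two, mul_assoc, Polynomial.coeff_X_mul, Polynomial.mul_coeff_zero,
    Polynomial.coeff_X_zero, zero_mul]

lemma grad_prop (f : MvPolynomial (Fin 3) ℝ) (hsm : SmoothQuartic f)
    (ℓ : Fin 3 → ℝ) (hℓ : ℓ ≠ 0) (m₁ m₂ : Fin 3 → ℂ) (c : ℂ)
    (hfact : ∀ p, lin (cvec ℓ) p = 0 → cev f p = c * (lin m₁ p * lin m₂ p) ^ 2)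
    (z : Fin 3 → ℂ) (hz0 : z ≠ 0) (hzℓ : lin (cvec ℓ) z = 0)
    (hm : lin m₁ z = 0 ∨ lin m₂ z = 0) :
    ∃ lam : ℂ, lam ≠ 0 ∧ ∀ i, eval z (pderiv i (cmap f)) = lam * (ℓ i : ℂ) := by
  have tang : ∀ w : Fin 3 → ℂ, lin (cvec ℓ) w = 0 →
      ∑ i, w i * eval z (pderiv i (cmap f)) = 0 := by
    intro w hw
    have key : ∀ t : ℂ, (lpoly z w (cmap f)).eval t
        = c * ((lin m₁ z + t * lin m₁ w) * (lin m₂ z + t * lin m₂ w)) ^ 2 := by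
      intro t
      rw [lpoly_eval]
      have hline : lin (cvec ℓ) (z + t • w) = 0 := by
        rw [lin_add, lin_smul, hzℓ, hw]; ring
      have hf := hfact (z + t • w) hline
      rw [show cev f (z + t • w) = eval (z + t • w) (cmap f) from rfl] at hf
      rw [hf, lin_add, lin_smul, lin_add, lin_smul]
    rcases hm with hA | hA
    · have hpq : lpoly z w (cmap f) = Polynomial.X ^ 2 *
          (Polynomial.C (c * (lin m₁ w) ^ 2) *
            (Polynomial.C (lin m₂ z) + Polynomial.X * Polynomial.C (lin m₂ w)) ^ 2) := by
        apply Polynomial.funext; intro t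
        rw [key t, hA]
        simp only [Polynomial.eval_mul, Polynomial.eval_pow, Polynomial.eval_add,
          Polynomial.eval_C, Polynomial.eval_X]
        ring
      have h1 := lpoly_coeff1 z w (cmap f)
      rw [hpq, coeff1_X2] at h1
      exact h1.symm
    · have hpq : lpoly z w (cmap f) = Polynomial.X ^ 2 *
          (Polynomial.C (c * (lin m₂ w) ^ 2) *
            (Polynomial.C (lin m₁ z) + Polynomial.X * Polynomial.C (lin m₁ w)) ^ 2) := by
        apply Polynomial.funext; intro t
        rw [key t, hA]
        simp only [Polynomial.eval_mul, Polynomial.eval_pow, Polynomial.eval_add,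
          Polynomial.eval_C, Polynomial.eval_X]
        ring
      have h1 := lpoly_coeff1 z w (cmap f)
      rw [hpq, coeff1_X2] at h1
      exact h1.symm
  set g : Fin 3 → ℂ := fun i => eval z (pderiv i (cmap f)) with hg
  have minor : ∀ i j, g i * (ℓ j : ℂ) = g j * (ℓ i : ℂ) := by
    intro i j
    have hw : lin (cvec ℓ)
        (fun k => (if i = k then (ℓ j : ℂ) else 0) - if j = k then (ℓ i : ℂ) else 0) = 0 := by
      simp [lin, cvec, mul_sub, Finset.sum_sub_distrib, mul_ite, mul_zero, Finset.sum_ite_eq]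
      ring
    have h := tang _ hw
    simp only [sub_mul, Finset.sum_sub_distrib, ite_mul, zero_mul, Finset.sum_ite_eq,
      Finset.mem_univ, if_true] at h
    linear_combination h
  have hlc : cvec ℓ ≠ 0 := by
    obtain ⟨k, hk⟩ : ∃ k, ℓ k ≠ 0 := by
      by_contra h; push_neg at h; exact hℓ (funext h)
    intro h
    apply hk
    have := congrFun h k
    simpa [cvec] using this
  obtain ⟨lam, hlam⟩ := propto g (cvec ℓ) hlc (by intro i j; simpa [cvec] using minor i j)
  have hgi : ∀ i, eval z (pderiv i (cmap f)) = lam * (ℓ i : ℂ) := by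
    intro i
    have := congrFun hlam i
    simpa [cvec, hg] using this
  refine ⟨lam, ?_, hgi⟩
  intro h0
  have hfz : cev f z = 0 := by
    rw [hfact z hzℓ]
    rcases hm with h | h <;> rw [h] <;> ring
  obtain ⟨i, hi⟩ := hsm z hz0 hfz
  apply hi
  rw [hgi i, h0, zero_mul]

lemma lin_comm {R : Type*} [CommRing R] (a b : Fin 3 → R) : lin a b = lin b a := by
  simp [lin, mul_comm]

lemma cr_zero {R : Type*} [CommRing R] (a : Fin 3 → R) : cr a 0 = 0 := by
  funext i; fin_cases i <;> simp [cr]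

lemma lin_self_ne (ℓ : Fin 3 → ℝ) (hℓ : ℓ ≠ 0) : lin ℓ ℓ ≠ 0 := by
  intro h
  apply hℓ
  have h3 : ℓ 0 * ℓ 0 + ℓ 1 * ℓ 1 + ℓ 2 * ℓ 2 = 0 := by
    simpa [lin, Fin.sum_univ_three] using h
  funext k
  fin_cases k <;> simp <;> nlinarith [sq_nonneg (ℓ 0), sq_nonneg (ℓ 1), sq_nonneg (ℓ 2)]

lemma lin_cvec (a b : Fin 3 → ℝ) : lin (cvec a) (cvec b) = ((lin a b : ℝ) : ℂ) := by
  simp [lin, cvec, Fin.sum_univ_three]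

lemma cvec_ne (ℓ : Fin 3 → ℝ) (hℓ : ℓ ≠ 0) : cvec ℓ ≠ 0 := by
  obtain ⟨k, hk⟩ : ∃ k, ℓ k ≠ 0 := by
    by_contra h; push_neg at h; exact hℓ (funext h)
  intro h
  apply hk
  have := congrFun h k
  simpa [cvec] using this

lemma dep_of_cr_zero {F : Type*} [Field F] (a b : Fin 3 → F) (h : cr a b = 0)
    (ha : lin a a ≠ 0) : ∃ t : F, b = t • a := by
  have h2 := cr_cr a a b
  rw [h, cr_zero] at h2
  refine ⟨lin a b / lin a a, ?_⟩
  funext i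
  have := congrFun h2 i
  simp only [Pi.zero_apply, Pi.sub_apply, Pi.smul_apply, smul_eq_mul] at this ⊢
  field_simp
  linear_combination this

lemma span_lemma (ℓ : Fin 3 → ℝ) (hℓ : ℓ ≠ 0) (m z w : Fin 3 → ℂ)
    (hzℓ : lin (cvec ℓ) z = 0) (hzm : lin m z = 0)
    (hwℓ : lin (cvec ℓ) w = 0) (hwm : lin m w = 0)
    (hz0 : z ≠ 0) (hnd : ∃ p, lin (cvec ℓ) p = 0 ∧ lin m p ≠ 0) :
    ∃ s : ℂ, w = s • z := by
  set L := cvec ℓ with hL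
  have hLL : lin L L ≠ 0 := by
    rw [hL, lin_cvec]
    exact_mod_cast Complex.ofReal_ne_zero.mpr (lin_self_ne ℓ hℓ)
  have hcc : cr L m ≠ 0 := by
    intro h
    obtain ⟨t, ht⟩ := dep_of_cr_zero L m h hLL
    obtain ⟨p, hp1, hp2⟩ := hnd
    apply hp2
    rw [ht, lin_comm, lin_smul, lin_comm, hp1, mul_zero]
  have hz : cr z (cr L m) = 0 := by
    rw [cr_cr, lin_comm z m, hzm, lin_comm z L, hzℓ]
    simp
  have hw : cr w (cr L m) = 0 := by
    rw [cr_cr, lin_comm w m, hwm, lin_comm w L, hwℓ]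
    simp
  obtain ⟨s₁, hs₁⟩ := propto z (cr L m) hcc (cr_minors _ _ hz)
  obtain ⟨s₂, hs₂⟩ := propto w (cr L m) hcc (cr_minors _ _ hw)
  have hs₁0 : s₁ ≠ 0 := by
    rintro rfl
    rw [zero_smul] at hs₁
    exact hz0 hs₁
  refine ⟨s₂ / s₁, ?_⟩
  rw [hs₂, hs₁, smul_smul]
  congr 1
  field_simp

lemma realpt_of_conj (z : Fin 3 → ℂ) (hz0 : z ≠ 0) (u : ℂ)
    (hu : (fun i => (starRingEnd ℂ) (z i)) = u • z) : IsRealPoint z := by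
  set x : Fin 3 → ℝ := fun i => (z i).re with hx
  set y : Fin 3 → ℝ := fun i => (z i).im with hy
  have hre : ∀ i, x i = u.re * x i - u.im * y i := by
    intro i
    have h1 := congrArg Complex.re (congrFun hu i)
    simpa [Complex.mul_re, hx, hy] using h1
  have him : ∀ i, -(y i) = u.re * y i + u.im * x i := by
    intro i
    have h1 := congrArg Complex.im (congrFun hu i)
    simpa [Complex.mul_im, hx, hy] using h1
  by_cases hb : u.im = 0
  · by_cases ha : u.re = 1
    · have hy0 : ∀ i, y i = 0 := by
        intro i
        have := him i
        rw [hb, ha] at this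
        simpa using by linarith
      have hx0 : x ≠ 0 := by
        intro h
        apply hz0
        funext i
        have h1 : x i = 0 := congrFun h i
        exact Complex.ext (by simpa [hx] using h1) (by simpa [hy] using hy0 i)
      refine ⟨x, 1, hx0, one_ne_zero, funext fun i => Complex.ext ?_ ?_⟩
      · simp [cvec, hx]
      · simp [cvec]
        exact hy0 i
    · have hx0 : ∀ i, x i = 0 := by
        intro i
        have := hre i
        rw [hb] at this
        have h2 : x i * (1 - u.re) = 0 := by linarith
        rcases mul_eq_zero.mp h2 with h | h
        · exact h
        · exact absurd (by linarith) ha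
      have hy0 : y ≠ 0 := by
        intro h
        apply hz0
        funext i
        exact Complex.ext (by simpa [hx] using hx0 i) (by simpa [hy] using congrFun h i)
      refine ⟨y, Complex.I, hy0, Complex.I_ne_zero, funext fun i => Complex.ext ?_ ?_⟩
      · simp [cvec, Complex.mul_re]
        exact hx0 i
      · simp [cvec, Complex.mul_im, hy]
  · set q := (u.re - 1) / u.im with hq
    have hyc : ∀ i, y i = q * x i := by
      intro i
      have := hre i
      rw [hq]
      field_simp
      linarith [this]
    have hx0 : x ≠ 0 := by
      intro h
      apply hz0
      funext i
      have h1 : x i = 0 := congrFun h i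
      exact Complex.ext (by simpa [hx] using h1) (by simp [hy] at *; rw [hyc i, h1, mul_zero])
    refine ⟨x, 1 + q * Complex.I, hx0, ?_, funext fun i => Complex.ext ?_ ?_⟩
    · intro h
      have := congrArg Complex.re h
      simp [Complex.add_re, Complex.mul_re] at this
    · simp [cvec, Complex.add_re, Complex.mul_re, hx]
    · simp [cvec, Complex.add_im, Complex.mul_im]
      exact hyc i

lemma real_intersect (ℓ ℓinf : Fin 3 → ℝ) (hℓ : ℓ ≠ 0)
    (hind : ¬∃ t : ℝ, ℓinf = t • ℓ) (z : Fin 3 → ℂ) (hz0 : z ≠ 0)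
    (h1 : lin (cvec ℓ) z = 0) (h2 : lin (cvec ℓinf) z = 0) : IsRealPoint z := by
  set x : Fin 3 → ℝ := fun i => (z i).re with hx
  set y : Fin 3 → ℝ := fun i => (z i).im with hy
  have hparts : ∀ (a : Fin 3 → ℝ), lin (cvec a) z = 0 → lin a x = 0 ∧ lin a y = 0 := by
    intro a ha
    constructor
    · have := congrArg Complex.re ha
      simpa [lin, cvec, Fin.sum_univ_three, Complex.add_re, Complex.mul_re, hx] using this
    · have := congrArg Complex.im ha
      simpa [lin, cvec, Fin.sum_univ_three, Complex.add_im, Complex.mul_im, hy] using this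
  obtain ⟨hx1, hy1⟩ := hparts ℓ h1
  obtain ⟨hx2, hy2⟩ := hparts ℓinf h2
  have hcc : cr ℓ ℓinf ≠ 0 := by
    intro h
    obtain ⟨t, ht⟩ := dep_of_cr_zero ℓ ℓinf h (lin_self_ne ℓ hℓ)
    exact hind ⟨t, ht⟩
  have hxc : cr x (cr ℓ ℓinf) = 0 := by
    rw [cr_cr, lin_comm x ℓinf, hx2, lin_comm x ℓ, hx1]
    simp
  have hyc : cr y (cr ℓ ℓinf) = 0 := by
    rw [cr_cr, lin_comm y ℓinf, hy2, lin_comm y ℓ, hy1]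
    simp
  obtain ⟨s₁, hs₁⟩ := propto x (cr ℓ ℓinf) hcc (cr_minors _ _ hxc)
  obtain ⟨s₂, hs₂⟩ := propto y (cr ℓ ℓinf) hcc (cr_minors _ _ hyc)
  refine ⟨cr ℓ ℓinf, Complex.mk s₁ s₂, hcc, ?_, funext fun i => Complex.ext ?_ ?_⟩
  · intro h
    rw [Complex.ext_iff] at h
    obtain ⟨ha, hb⟩ := h
    simp at ha hb
    apply hz0
    funext i
    have e1 : (z i).re = 0 := by
      have := congrFun hs₁ i
      rw [ha] at this
      simpa [hx] using this
    have e2 : (z i).im = 0 := by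
      have := congrFun hs₂ i
      rw [hb] at this
      simpa [hy] using this
    exact Complex.ext e1 e2
  · simp [cvec, Complex.mul_re, hx]
    exact congrFun hs₁ i
  · simp [cvec, Complex.mul_im, hy]
    exact congrFun hs₂ i

lemma keypoly (f : MvPolynomial (Fin 3) ℝ) (ℓ : Fin 3 → ℝ)
    (m₁ m₂ u₁ u₂ : Fin 3 → ℂ) (c d : ℂ)
    (hfact : ∀ p, lin (cvec ℓ) p = 0 → cev f p = c * (lin m₁ p * lin m₂ p) ^ 2)
    (hfact' : ∀ p, lin (cvec ℓ) p = 0 → cev f p = d * (lin u₁ p * lin u₂ p) ^ 2)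
    (P Q : Fin 3 → ℂ) (hP : lin (cvec ℓ) P = 0) (hQ : lin (cvec ℓ) Q = 0)
    (hm1P : lin m₁ P = 0) (hm2Q : lin m₂ Q = 0)
    (hu1P : lin u₁ P = 0) (hu2P : lin u₂ P = 0) :
    c * (lin m₁ Q) ^ 2 * (lin m₂ P) ^ 2 = 0 := by
  have hline : ∀ t : ℂ, lin (cvec ℓ) (P + t • Q) = 0 := fun t => by
    rw [lin_add, lin_smul, hP, hQ]; ring
  set S₁ : Polynomial ℂ := Polynomial.C (c * (lin m₁ Q) ^ 2) *
    (Polynomial.C (lin m₂ P) + Polynomial.X * Polynomial.C (lin m₂ Q)) ^ 2 with hS₁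
  have heq : Polynomial.X ^ 2 * S₁
      = Polynomial.C (d * (lin u₁ Q * lin u₂ Q) ^ 2) * Polynomial.X ^ 4 := by
    apply Polynomial.funext
    intro t
    have e1 : Polynomial.eval t (Polynomial.X ^ 2 * S₁) = cev f (P + t • Q) := by
      rw [hfact _ (hline t), lin_add, lin_smul, lin_add, lin_smul, hm1P]
      simp only [hS₁, Polynomial.eval_mul, Polynomial.eval_pow, Polynomial.eval_add,
        Polynomial.eval_C, Polynomial.eval_X]
      ring
    have e2 : Polynomial.eval t (Polynomial.C (d * (lin u₁ Q * lin u₂ Q) ^ 2)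
        * Polynomial.X ^ 4) = cev f (P + t • Q) := by
      rw [hfact' _ (hline t), lin_add, lin_smul, lin_add, lin_smul, hu1P, hu2P]
      simp only [Polynomial.eval_mul, Polynomial.eval_pow, Polynomial.eval_C, Polynomial.eval_X]
      ring
    rw [e1, e2]
  have hco := congrArg (fun p => Polynomial.coeff p 2) heq
  simp only [Polynomial.coeff_X_pow_mul' S₁ 2 2, Polynomial.coeff_C_mul,
    Polynomial.coeff_X_pow] at hco
  norm_num at hco
  rw [Polynomial.coeff_zero_eq_eval_zero] at hco
  simp only [hS₁, Polynomial.eval_mul, Polynomial.eval_pow, Polynomial.eval_add,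
    Polynomial.eval_C, Polynomial.eval_X] at hco
  rw [← hco]
  ring

lemma lin_conj (a : Fin 3 → ℝ) (z : Fin 3 → ℂ) :
    lin (cvec a) (fun i => (starRingEnd ℂ) (z i)) = (starRingEnd ℂ) (lin (cvec a) z) := by
  simp [lin, cvec, Fin.sum_univ_three, map_add, map_mul, Complex.conj_ofReal]

lemma realpt_smul (z : Fin 3 → ℂ) (a : ℂ) (ha : a ≠ 0) (h : IsRealPoint (a • z)) :
    IsRealPoint z := by
  obtain ⟨w, t, hw, ht, hz⟩ := h
  refine ⟨w, a⁻¹ * t, hw, mul_ne_zero (inv_ne_zero ha) ht, ?_⟩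
  funext i
  have h2 := congrFun hz i
  simp only [Pi.smul_apply, smul_eq_mul, cvec] at h2 ⊢
  field_simp
  linear_combination h2

lemma cvec_smul (r : ℝ) (x : Fin 3 → ℝ) : ((r : ℂ)) • cvec x = cvec (r • x) := by
  funext i
  simp [cvec]

/-- Let `L = V(ℓ)` be a real bitangent of the smooth quartic `V(f)`
that is non-split or a hyperflex line. Then for every real line `L∞ ≠ L` not containing
the tangency points of `L`, the Qtype of `L` relative to `L∞` is defined and equals
`+1`; moreover in the non-split case the tangency points automatically avoid every
real line `L∞ ≠ L`. -/
theorem statement8 (f : MvPolynomial (Fin 3) ℝ) (hf : f.IsHomogeneous 4)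
    (hsm : SmoothQuartic f)
    (ℓ : Fin 3 → ℝ) (hℓ : ℓ ≠ 0) (z₁ z₂ : Fin 3 → ℂ)
    (hbt : IsBitangentAt f (cvec ℓ) z₁ z₂)
    (hcase : NonSplitPair z₁ z₂ ∨ HyperflexPair z₁ z₂) :
    (∀ ℓinf : Fin 3 → ℝ, ℓinf ≠ 0 → (¬ ∃ t : ℝ, ℓinf = t • ℓ) →
        lin (cvec ℓinf) z₁ ≠ 0 → lin (cvec ℓinf) z₂ ≠ 0 →
        HasQtype f ℓinf (cvec ℓ) 1 ∧ ¬ HasQtype f ℓinf (cvec ℓ) (-1)) ∧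
    (NonSplitPair z₁ z₂ → ∀ ℓinf : Fin 3 → ℝ, ℓinf ≠ 0 →
        (¬ ∃ t : ℝ, ℓinf = t • ℓ) →
        lin (cvec ℓinf) z₁ ≠ 0 ∧ lin (cvec ℓinf) z₂ ≠ 0) := by
  obtain ⟨hl0, hz10, hz20, hz1l, hz2l, m₁, m₂, c, hc, hm1z, hm2z, hnd1, hnd2, hfact⟩ := hbt
  obtain ⟨k, hk⟩ : ∃ k, ℓ k ≠ 0 := by
    by_contra h; push_neg at h; exact hℓ (funext h)
  have hkC : ((ℓ k : ℂ)) ≠ 0 := Complex.ofReal_ne_zero.mpr hk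
  -- Part 2
  have part2 : NonSplitPair z₁ z₂ → ∀ ℓinf : Fin 3 → ℝ, ℓinf ≠ 0 →
      (¬ ∃ t : ℝ, ℓinf = t • ℓ) →
      lin (cvec ℓinf) z₁ ≠ 0 ∧ lin (cvec ℓinf) z₂ ≠ 0 := by
    rintro ⟨⟨t, ht0, htc⟩, hnr⟩ ℓinf hinf0 hind
    have h1 : lin (cvec ℓinf) z₁ ≠ 0 := by
      intro h
      exact hnr (real_intersect ℓ ℓinf hℓ hind z₁ hz10 hz1l h)
    refine ⟨h1, fun h2 => h1 ?_⟩
    have hc1 : (starRingEnd ℂ) (lin (cvec ℓinf) z₁) = 0 := by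
      rw [← lin_conj, show (fun i => (starRingEnd ℂ) (z₁ i)) = t • z₂ from htc,
        lin_smul, h2, mul_zero]
    simpa using congrArg (starRingEnd ℂ) hc1
  refine ⟨?_, part2⟩
  intro ℓinf hinf0 hind h1 h2
  -- normalized tangency points
  set a₁ : ℂ := (lin (cvec ℓinf) z₁)⁻¹ with ha₁def
  set a₂ : ℂ := (lin (cvec ℓinf) z₂)⁻¹ with ha₂def
  have ha₁ : a₁ ≠ 0 := inv_ne_zero h1
  have ha₂ : a₂ ≠ 0 := inv_ne_zero h2
  set zz₁ : Fin 3 → ℂ := a₁ • z₁ with hzz₁def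
  set zz₂ : Fin 3 → ℂ := a₂ • z₂ with hzz₂def
  have hzz₁0 : zz₁ ≠ 0 := smul_ne_zero ha₁ hz10
  have hzz₂0 : zz₂ ≠ 0 := smul_ne_zero ha₂ hz20
  have hn₁ : lin (cvec ℓinf) zz₁ = 1 := by
    rw [hzz₁def, lin_smul, ha₁def, inv_mul_cancel₀ h1]
  have hn₂ : lin (cvec ℓinf) zz₂ = 1 := by
    rw [hzz₂def, lin_smul, ha₂def, inv_mul_cancel₀ h2]
  have hzz₁l : lin (cvec ℓ) zz₁ = 0 := by rw [hzz₁def, lin_smul, hz1l, mul_zero]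
  have hzz₂l : lin (cvec ℓ) zz₂ = 0 := by rw [hzz₂def, lin_smul, hz2l, mul_zero]
  have hm1zz : lin m₁ zz₁ = 0 := by rw [hzz₁def, lin_smul, hm1z, mul_zero]
  have hm2zz : lin m₂ zz₂ = 0 := by rw [hzz₂def, lin_smul, hm2z, mul_zero]
  -- gradients
  obtain ⟨lam₁, hlam₁0, hlam₁⟩ :=
    grad_prop f hsm ℓ hℓ m₁ m₂ c hfact zz₁ hzz₁0 hzz₁l (Or.inl hm1zz)
  obtain ⟨lam₂, hlam₂0, hlam₂⟩ :=
    grad_prop f hsm ℓ hℓ m₁ m₂ c hfact zz₂ hzz₂0 hzz₂l (Or.inr hm2zz)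
  have hDv : ∀ (v : Fin 3 → ℝ) (zz : Fin 3 → ℂ) (lam : ℂ),
      (∀ i, eval zz (pderiv i (cmap f)) = lam * (ℓ i : ℂ)) →
      Dv f v zz = lam * ((lin ℓ v : ℝ) : ℂ) := by
    intro v zz lam h
    rw [Dv, Fin.sum_univ_three, h 0, h 1, h 2]
    rw [lin, Fin.sum_univ_three]
    push_cast
    ring
  -- key facts depending on the case
  have hkey : (∃ ρ : ℝ, 0 < ρ ∧ lam₁ * lam₂ = (ρ : ℂ)) ∧
      (zz₂ = zz₁ ∨ (lin m₁ zz₂ ≠ 0 ∧ lin m₂ zz₁ ≠ 0)) := by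
    rcases hcase with ⟨⟨t, ht0, htc⟩, hnr⟩ | ⟨⟨t, ht0, htc⟩, hrp⟩
    · -- non-split
      have hconjlin : (starRingEnd ℂ) (lin (cvec ℓinf) z₁) = t * lin (cvec ℓinf) z₂ := by
        rw [← lin_conj, show (fun i => (starRingEnd ℂ) (z₁ i)) = t • z₂ from htc, lin_smul]
      have hca : (starRingEnd ℂ) a₁ * t = a₂ := by
        rw [ha₁def, ha₂def, map_inv₀, hconjlin]
        field_simp
      have hzzconj : (fun i => (starRingEnd ℂ) (zz₁ i)) = zz₂ := by
        funext i
        have h3 := congrFun htc i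
        simp only [Pi.smul_apply, smul_eq_mul] at h3
        show (starRingEnd ℂ) (a₁ * z₁ i) = a₂ * z₂ i
        rw [map_mul, h3]
        linear_combination z₂ i * hca
      have hgc : ∀ i, eval zz₂ (pderiv i (cmap f))
          = (starRingEnd ℂ) (eval zz₁ (pderiv i (cmap f))) := by
        intro i
        rw [← hzzconj, show pderiv i (cmap f) = cmap (pderiv i f) from pderiv_map,
          cmap_eval_conj]
      have hlamc : lam₂ = (starRingEnd ℂ) lam₁ := by
        have := hgc k
        rw [hlam₂ k, hlam₁ k, map_mul, Complex.conj_ofReal] at this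
        exact mul_right_cancel₀ hkC this
      constructor
      · refine ⟨Complex.normSq lam₁, Complex.normSq_pos.mpr hlam₁0, ?_⟩
        rw [hlamc, Complex.mul_conj]
      · right
        constructor
        · intro hm12
          obtain ⟨s, hs⟩ := span_lemma ℓ hℓ m₁ zz₁ zz₂ hzz₁l hm1zz hzz₂l hm12 hzz₁0 hnd1
          have : IsRealPoint zz₁ := by
            apply realpt_of_conj zz₁ hzz₁0 s
            rw [hzzconj, hs]
          exact hnr (realpt_smul z₁ a₁ ha₁ this)
        · intro hm21
          obtain ⟨s, hs⟩ := span_lemma ℓ hℓ m₂ zz₂ zz₁ hzz₂l hm2zz hzz₁l hm21 hzz₂0 hnd2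
          have hs0 : s ≠ 0 := by
            rintro rfl
            rw [zero_smul] at hs
            exact hzz₁0 hs
          have : IsRealPoint zz₁ := by
            apply realpt_of_conj zz₁ hzz₁0 s⁻¹
            rw [hzzconj]
            rw [hs, smul_smul, inv_mul_cancel₀ hs0, one_smul]
          exact hnr (realpt_smul z₁ a₁ ha₁ this)
    · -- hyperflex
      have hlinz₂ : lin (cvec ℓinf) z₂ = t * lin (cvec ℓinf) z₁ := by
        rw [htc, lin_smul]
      have hca : a₂ * t = a₁ := by
        rw [ha₁def, ha₂def, hlinz₂]
        have h1' : lin (cvec ℓinf) z₁ ≠ 0 := h1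
        field_simp
      have hzzeq : zz₂ = zz₁ := by
        rw [hzz₂def, hzz₁def, htc, smul_smul, hca]
      have hlameq : lam₂ = lam₁ := by
        have e1 := hlam₂ k
        rw [hzzeq, hlam₁ k] at e1
        exact mul_right_cancel₀ hkC e1.symm
      obtain ⟨xw, s, hxw0, hs0, hz1r⟩ := hrp
      have hzz₁r : zz₁ = (a₁ * s) • cvec xw := by
        rw [hzz₁def, hz1r, smul_smul]
      have hμeq : (a₁ * s) * ((lin ℓinf xw : ℝ) : ℂ) = 1 := by
        rw [← lin_cvec, ← lin_smul, ← hzz₁r, hn₁]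
      have hμ0 : lin ℓinf xw ≠ 0 := by
        intro h
        rw [h] at hμeq
        simp at hμeq
      have has : a₁ * s = ((lin ℓinf xw)⁻¹ : ℝ) := by
        rw [Complex.ofReal_inv]
        exact eq_inv_of_mul_eq_one_left hμeq
      have hzz₁rv : zz₁ = cvec ((lin ℓinf xw)⁻¹ • xw) := by
        rw [hzz₁r, has, cvec_smul]
      have hlamreal : lam₁ = ((eval ((lin ℓinf xw)⁻¹ • xw) (pderiv k f) / ℓ k : ℝ) : ℂ) := by
        have e1 := hlam₁ k
        rw [hzz₁rv, show pderiv k (cmap f) = cmap (pderiv k f) from pderiv_map,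
          cmap_eval_real] at e1
        rw [Complex.ofReal_div, eq_div_iff hkC]
        exact e1.symm
      refine ⟨⟨(eval ((lin ℓinf xw)⁻¹ • xw) (pderiv k f) / ℓ k) ^ 2, ?_, ?_⟩, Or.inl hzzeq⟩
      · apply pow_two_pos_of_ne_zero
        intro h
        apply hlam₁0
        rw [hlamreal, h]
        simp
      · rw [hlameq, hlamreal]
        push_cast
        ring
  obtain ⟨⟨ρ, hρpos, hρ⟩, hsame⟩ := hkey
  have hbtzz : IsBitangentAt f (cvec ℓ) zz₁ zz₂ :=
    ⟨hl0, hzz₁0, hzz₂0, hzz₁l, hzz₂l, m₁, m₂, c, hc, hm1zz, hm2zz, hnd1, hnd2, hfact⟩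
  have hlinℓℓ : lin (cvec ℓ) (cvec ℓ) ≠ 0 := by
    rw [lin_cvec]
    exact Complex.ofReal_ne_zero.mpr (lin_self_ne ℓ hℓ)
  -- the positive-product computation
  have hmix : ∀ (r' : ℝ) (v' : Fin 3 → ℝ), lin ℓ v' ≠ 0 →
      Dv f v' zz₁ * Dv f v' zz₂ = (r' : ℂ) → 0 < r' := by
    intro r' v' hv' hprod
    rw [hDv v' zz₁ lam₁ hlam₁, hDv v' zz₂ lam₂ hlam₂] at hprod
    have : ((ρ * (lin ℓ v') ^ 2 : ℝ) : ℂ) = (r' : ℂ) := by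
      rw [← hprod]
      push_cast
      linear_combination -(((lin ℓ v' : ℝ) : ℂ) ^ 2) * hρ
    have hr' : r' = ρ * (lin ℓ v') ^ 2 := (Complex.ofReal_inj.mp this).symm
    rw [hr']
    exact mul_pos hρpos (pow_two_pos_of_ne_zero hv')
  constructor
  · -- HasQtype +1
    refine ⟨zz₁, zz₂, ℓ, ρ * (lin ℓ ℓ) ^ 2, hbtzz, hn₁, hn₂, ?_, ?_, Or.inl ⟨?_, rfl⟩⟩
    · rw [lin_cvec]
      exact Complex.ofReal_ne_zero.mpr (lin_self_ne ℓ hℓ)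
    · rw [hDv ℓ zz₁ lam₁ hlam₁, hDv ℓ zz₂ lam₂ hlam₂]
      push_cast
      linear_combination ((lin ℓ ℓ : ℝ) : ℂ) ^ 2 * hρ
    · exact mul_pos hρpos (pow_two_pos_of_ne_zero (lin_self_ne ℓ hℓ))
  · -- not HasQtype -1
    rintro ⟨z₁', z₂', v', r', hbt', hn1', hn2', hv', hprod', hsign'⟩
    rcases hsign' with ⟨_, habs⟩ | ⟨hrneg, _⟩
    · exact absurd habs (by decide)
    obtain ⟨_, hz10', hz20', hz1l', hz2l', u₁, u₂, d, hd, hu1z', hu2z', hnd1', hnd2', hfact'⟩ :=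
      hbt'
    have hv'' : lin ℓ v' ≠ 0 := by
      intro h
      apply hv'
      rw [lin_cvec, h]
      simp
    have hclass : ∀ w : Fin 3 → ℂ, lin (cvec ℓ) w = 0 → w ≠ 0 →
        lin (cvec ℓinf) w = 1 → (lin m₁ w = 0 ∨ lin m₂ w = 0) → w = zz₁ ∨ w = zz₂ := by
      intro w hwl hw0 hwn hm
      rcases hm with h | h
      · left
        obtain ⟨s, hs⟩ := span_lemma ℓ hℓ m₁ z₁ w hz1l hm1z hwl h hz10 hnd1
        have hseq : s * lin (cvec ℓinf) z₁ = 1 := by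
          rw [← lin_smul, ← hs, hwn]
        rw [hs, hzz₁def, ha₁def, eq_inv_of_mul_eq_one_left hseq]
      · right
        obtain ⟨s, hs⟩ := span_lemma ℓ hℓ m₂ z₂ w hz2l hm2z hwl h hz20 hnd2
        have hseq : s * lin (cvec ℓinf) z₂ = 1 := by
          rw [← lin_smul, ← hs, hwn]
        rw [hs, hzz₂def, ha₂def, eq_inv_of_mul_eq_one_left hseq]
    have hcev : ∀ w : Fin 3 → ℂ, lin (cvec ℓ) w = 0 → cev f w = 0 →
        lin m₁ w = 0 ∨ lin m₂ w = 0 := by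
      intro w hwl hwz
      have := hfact w hwl
      rw [hwz] at this
      have h3 : (lin m₁ w * lin m₂ w) ^ 2 = 0 := by
        rcases mul_eq_zero.mp this.symm with h | h
        · exact absurd h hc
        · exact h
      exact mul_eq_zero.mp (pow_eq_zero_iff (n := 2) (by norm_num) |>.mp h3)
    have hd1 : z₁' = zz₁ ∨ z₁' = zz₂ := by
      apply hclass z₁' hz1l' hz10' hn1'
      apply hcev z₁' hz1l'
      rw [hfact' z₁' hz1l', hu1z']
      ring
    have hd2 : z₂' = zz₁ ∨ z₂' = zz₂ := by
      apply hclass z₂' hz2l' hz20' hn2'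
      apply hcev z₂' hz2l'
      rw [hfact' z₂' hz2l']
      rw [hu2z']
      ring
    -- degenerate double-point cases are impossible (or reduce via zz₂ = zz₁)
    have habs1 : ¬(lin u₁ zz₁ = 0 ∧ lin u₂ zz₁ = 0 ∧ zz₂ ≠ zz₁) := by
      rintro ⟨e1, e2, hne⟩
      rcases hsame with h | ⟨hm12, hm21⟩
      · exact hne h
      have := keypoly f ℓ m₁ m₂ u₁ u₂ c d hfact hfact' zz₁ zz₂ hzz₁l hzz₂l hm1zz hm2zz e1 e2
      rcases mul_eq_zero.mp this with h | h
      · rcases mul_eq_zero.mp h with h' | h'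
        · exact hc h'
        · exact hm12 (pow_eq_zero_iff (n := 2) (by norm_num) |>.mp h')
      · exact hm21 (pow_eq_zero_iff (n := 2) (by norm_num) |>.mp h)
    have habs2 : ¬(lin u₁ zz₂ = 0 ∧ lin u₂ zz₂ = 0 ∧ zz₂ ≠ zz₁) := by
      rintro ⟨e1, e2, hne⟩
      rcases hsame with h | ⟨hm12, hm21⟩
      · exact hne h
      have hfactsw : ∀ p, lin (cvec ℓ) p = 0 → cev f p = c * (lin m₂ p * lin m₁ p) ^ 2 := by
        intro p hp
        rw [hfact p hp]
        ring
      have := keypoly f ℓ m₂ m₁ u₁ u₂ c d hfactsw hfact' zz₂ zz₁ hzz₂l hzz₁l hm2zz hm1zz e1 e2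
      rcases mul_eq_zero.mp this with h | h
      · rcases mul_eq_zero.mp h with h' | h'
        · exact hc h'
        · exact hm21 (pow_eq_zero_iff (n := 2) (by norm_num) |>.mp h')
      · exact hm12 (pow_eq_zero_iff (n := 2) (by norm_num) |>.mp h)
    rcases hd1 with e1 | e1 <;> rcases hd2 with e2 | e2
    · -- z₁' = zz₁, z₂' = zz₁
      by_cases hne : zz₂ = zz₁
      · rw [e1, e2] at hprod'
        have hprod2 : Dv f v' zz₁ * Dv f v' zz₂ = (r' : ℂ) := by
          rw [hne]
          exact hprod'
        exact absurd (hmix r' v' hv'' hprod2) (by linarith)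
      · exact habs1 ⟨by rw [← e1]; exact hu1z', by rw [← e2]; exact hu2z', hne⟩
    · rw [e1, e2] at hprod'
      exact absurd (hmix r' v' hv'' hprod') (by linarith)
    · rw [e1, e2, mul_comm] at hprod'
      exact absurd (hmix r' v' hv'' hprod') (by linarith)
    · by_cases hne : zz₂ = zz₁
      · rw [e1, e2] at hprod'
        have hprod2 : Dv f v' zz₁ * Dv f v' zz₂ = (r' : ℂ) := by
          rw [← hne]
          exact hprod'
        exact absurd (hmix r' v' hv'' hprod2) (by linarith)
      · exact habs2 ⟨by rw [← e1]; exact hu1z', by rw [← e2]; exact hu2z', hne⟩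

end
end
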